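/- arXiv:1202.5425 — 11 statements merged into one kernel-verified Lean document; each statement's English description precedes it below -/
import Mathlib

section
/- Let T be a real-linear bounded operator on L^p(Ω,μ;ℝ) for 1 ≤ p < ∞, and let T_ℂ be its canonical complex-linear extension to L^p(Ω,μ;ℂ) given by T_ℂ(f+ig) = Tf + i Tg. Then ‖T_ℂ‖ = ‖T‖. -/
/-!
Write `c_q = ∫ |Re u|^q du` over the unit circle, `0 < c_q < ∞`. Rotation invariance of the
circle measure gives `∫ |Re (u z)|^q du = c_q |z|^q` for every `z : ℂ`, so integrating over `Ω`
(Tonelli) yields `∫ ‖Re (u f)‖_p^p du = c_p ‖f‖_p^p` for `f ∈ L^p(Ω; ℂ)`. Since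
`Re (u T_ℂ f) = T (Re (u f))`, the inequality `‖Re (u T_ℂ f)‖_p ≤ ‖T‖ ‖Re (u f)‖_p`, averaged
over `u`, gives `‖T_ℂ f‖_p ≤ ‖T‖ ‖f‖_p`. The reverse inequality comes from restricting `T_ℂ` to
real-valued functions.
-/

open MeasureTheory Complex
open scoped ENNReal

theorem lintegral_lintegral_swap_of_sigmaFinite_restrict {α β : Type*} [MeasurableSpace α]
    [MeasurableSpace β] {μ : Measure α} [SFinite μ] {ν : Measure β} {t : Set β}
    [SigmaFinite (ν.restrict t)] {F : α → β → ℝ≥0∞} (hF : Measurable (Function.uncurry F))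
    (hFt : ∀ a, ∀ b ∉ t, F a b = 0) :
    ∫⁻ a, ∫⁻ b, F a b ∂ν ∂μ = ∫⁻ b, ∫⁻ a, F a b ∂μ ∂ν := by
  have hinner : ∀ a, ∫⁻ b in t, F a b ∂ν = ∫⁻ b, F a b ∂ν := fun a =>
    setLIntegral_eq_of_support_subset fun b hb => by_contra fun hbt => hb (hFt a b hbt)
  have houter : ∫⁻ b in t, ∫⁻ a, F a b ∂μ ∂ν = ∫⁻ b, ∫⁻ a, F a b ∂μ ∂ν :=
    setLIntegral_eq_of_support_subset fun b hb => by_contra fun hbt =>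
      hb (by simp only [hFt _ b hbt, lintegral_zero])
  simp_rw [← hinner, ← houter]
  exact lintegral_lintegral_swap hF.aemeasurable

theorem UnitAddCircle.surjective_toCircle :
    Function.Surjective (AddCircle.toCircle : UnitAddCircle → Circle) := by
  intro w
  obtain ⟨t, rfl⟩ := Circle.exp_surjective w
  refine ⟨((t / (2 * Real.pi) : ℝ) : UnitAddCircle), ?_⟩
  rw [AddCircle.toCircle_apply_mk]
  congr 1
  field_simp

noncomputable def circleAbsReMoment (q : ℝ) : ℝ≥0∞ :=
  ∫⁻ θ : UnitAddCircle, ‖(θ.toCircle : ℂ).re‖ₑ ^ q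

theorem circleAbsReMoment_ne_top {q : ℝ} (hq : 0 ≤ q) : circleAbsReMoment q ≠ ∞ := by
  refine ne_top_of_le_ne_top (measure_ne_top (volume : Measure UnitAddCircle) Set.univ) ?_
  rw [← setLIntegral_one, Measure.restrict_univ]
  refine lintegral_mono fun θ => ENNReal.rpow_le_one ?_ hq
  calc ‖(θ.toCircle : ℂ).re‖ₑ ≤ ‖(θ.toCircle : ℂ)‖ₑ :=
        enorm_le_iff_norm_le.mpr (RCLike.norm_re_le_norm (K := ℂ) _)
    _ = 1 := by rw [← ofReal_norm, Circle.norm_coe, ENNReal.ofReal_one]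

theorem circleAbsReMoment_ne_zero (q : ℝ) : circleAbsReMoment q ≠ 0 := by
  have hcont : Continuous fun θ : UnitAddCircle => ‖(θ.toCircle : ℂ).re‖ₑ ^ q :=
    ENNReal.continuous_rpow_const.comp
      (continuous_re.comp (continuous_subtype_val.comp AddCircle.continuous_toCircle)).enorm
  intro h
  rw [circleAbsReMoment, lintegral_eq_zero_iff hcont.measurable] at h
  have h₀ := congrFun ((Continuous.ae_eq_iff_eq volume hcont continuous_const).mp h) 0
  simp at h₀

theorem lintegral_enorm_re_toCircle_mul_rpow {q : ℝ} (hq : 0 ≤ q) (z : ℂ) :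
    ∫⁻ θ : UnitAddCircle, ‖((θ.toCircle : ℂ) * z).re‖ₑ ^ q = circleAbsReMoment q * ‖z‖ₑ ^ q := by
  obtain ⟨θ₀, hθ₀⟩ := UnitAddCircle.surjective_toCircle (Circle.exp z.arg)
  have hz : z = ‖z‖ * (θ₀.toCircle : ℂ) := by
    rw [hθ₀, Circle.coe_exp, norm_mul_exp_arg_mul_I]
  have hrotate : ∀ θ : UnitAddCircle,
      ‖((θ.toCircle : ℂ) * z).re‖ₑ ^ q = ‖z‖ₑ ^ q * ‖((θ + θ₀).toCircle : ℂ).re‖ₑ ^ q := by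
    intro θ
    conv_lhs => rw [hz, mul_left_comm, ← Circle.coe_mul, ← AddCircle.toCircle_add, re_ofReal_mul]
    rw [enorm_mul, enorm_norm, ENNReal.mul_rpow_of_nonneg _ _ hq]
  simp_rw [hrotate]
  rw [lintegral_const_mul' _ _ (ENNReal.rpow_ne_top_of_nonneg hq enorm_ne_top),
    lintegral_add_right_eq_self (fun θ : UnitAddCircle => ‖(θ.toCircle : ℂ).re‖ₑ ^ q), mul_comm,
    circleAbsReMoment]

namespace MeasureTheory.Lp

variable {Ω : Type*} [MeasurableSpace Ω] {μ : Measure Ω} {p : ℝ≥0∞}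

theorem enorm_rpow_eq_lintegral {E : Type*} [NormedAddCommGroup E] (hp0 : p ≠ 0) (hp : p ≠ ∞)
    (f : Lp E p μ) : ‖f‖ₑ ^ p.toReal = ∫⁻ x, ‖f x‖ₑ ^ p.toReal ∂μ := by
  rw [enorm_def, eLpNorm_eq_eLpNorm' hp0 hp,
    lintegral_rpow_enorm_eq_rpow_eLpNorm' (ENNReal.toReal_pos hp0 hp)]

theorem lintegral_enorm_re_toCircle_smul_rpow (hp0 : p ≠ 0) (hp : p ≠ ∞) (f : Lp ℂ p μ) :
    ∫⁻ θ : UnitAddCircle, ‖reCLM.compLp ((θ.toCircle : ℂ) • f)‖ₑ ^ p.toReal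
      = circleAbsReMoment p.toReal * ‖f‖ₑ ^ p.toReal := by
  have hq : 0 < p.toReal := ENNReal.toReal_pos hp0 hp
  -- `μ` need not be σ-finite, but it is on a set off which `f` vanishes; Tonelli needs no more.
  obtain ⟨t, -, hft, hσ⟩ := ((Lp.memLp f).finStronglyMeasurable_of_stronglyMeasurable
    (Lp.stronglyMeasurable f) hp0 hp).exists_set_sigmaFinite
  have hθ : ∀ θ : UnitAddCircle, ‖reCLM.compLp ((θ.toCircle : ℂ) • f)‖ₑ ^ p.toReal
      = ∫⁻ x, ‖((θ.toCircle : ℂ) * f x).re‖ₑ ^ p.toReal ∂μ := fun θ => by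
    rw [enorm_rpow_eq_lintegral hp0 hp]
    refine lintegral_congr_ae ?_
    filter_upwards [reCLM.coeFn_compLp ((θ.toCircle : ℂ) • f), coeFn_smul (θ.toCircle : ℂ) f]
      with x hre hsmul
    rw [hre, hsmul]
    rfl
  have hmeas : Measurable fun θx : UnitAddCircle × Ω =>
      ‖((θx.1.toCircle : ℂ) * f θx.2).re‖ₑ ^ p.toReal := by
    have he : Measurable fun θ : UnitAddCircle => (θ.toCircle : ℂ) :=
      (continuous_subtype_val.comp AddCircle.continuous_toCircle).measurable
    exact ENNReal.continuous_rpow_const.measurable.comp (measurable_re.comp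
      ((he.comp measurable_fst).mul ((Lp.stronglyMeasurable f).measurable.comp measurable_snd))).enorm
  calc ∫⁻ θ : UnitAddCircle, ‖reCLM.compLp ((θ.toCircle : ℂ) • f)‖ₑ ^ p.toReal
      = ∫⁻ θ : UnitAddCircle, ∫⁻ x, ‖((θ.toCircle : ℂ) * f x).re‖ₑ ^ p.toReal ∂μ :=
        lintegral_congr hθ
    _ = ∫⁻ x, (∫⁻ θ : UnitAddCircle, ‖((θ.toCircle : ℂ) * f x).re‖ₑ ^ p.toReal) ∂μ :=
        lintegral_lintegral_swap_of_sigmaFinite_restrict (t := t) hmeas fun θ x hx => by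
          simp [hft x hx, ENNReal.zero_rpow_of_pos hq]
    _ = ∫⁻ x, circleAbsReMoment p.toReal * ‖f x‖ₑ ^ p.toReal ∂μ :=
        lintegral_congr fun x => lintegral_enorm_re_toCircle_mul_rpow hq.le (f x)
    _ = circleAbsReMoment p.toReal * ‖f‖ₑ ^ p.toReal := by
        rw [lintegral_const_mul' _ _ (circleAbsReMoment_ne_top hq.le),
          enorm_rpow_eq_lintegral hp0 hp]

theorem norm_le_of_forall_norm_re_smul_le [Fact (1 ≤ p)] (hp : p ≠ ∞) {Ω' : Type*}
    [MeasurableSpace Ω'] {ν : Measure Ω'} {f : Lp ℂ p μ} {g : Lp ℂ p ν} {C : ℝ} (hC : 0 ≤ C)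
    (h : ∀ w : Circle, ‖reCLM.compLp ((w : ℂ) • g)‖ ≤ C * ‖reCLM.compLp ((w : ℂ) • f)‖) :
    ‖g‖ ≤ C * ‖f‖ := by
  have hp0 : p ≠ 0 := (zero_lt_one.trans_le Fact.out).ne'
  have hq : 0 < p.toReal := ENNReal.toReal_pos hp0 hp
  set c := circleAbsReMoment p.toReal
  have hθ : ∀ θ : UnitAddCircle, ‖reCLM.compLp ((θ.toCircle : ℂ) • g)‖ₑ ^ p.toReal
      ≤ ENNReal.ofReal C ^ p.toReal * ‖reCLM.compLp ((θ.toCircle : ℂ) • f)‖ₑ ^ p.toReal := by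
    intro θ
    rw [← ENNReal.mul_rpow_of_nonneg _ _ hq.le, ← ofReal_norm, ← ofReal_norm,
      ← ENNReal.ofReal_mul hC]
    exact ENNReal.rpow_le_rpow (ENNReal.ofReal_le_ofReal (h θ.toCircle)) hq.le
  have hint : c * ‖g‖ₑ ^ p.toReal ≤ c * (ENNReal.ofReal C * ‖f‖ₑ) ^ p.toReal :=
    calc c * ‖g‖ₑ ^ p.toReal
        = ∫⁻ θ : UnitAddCircle, ‖reCLM.compLp ((θ.toCircle : ℂ) • g)‖ₑ ^ p.toReal :=
          (lintegral_enorm_re_toCircle_smul_rpow hp0 hp g).symm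
      _ ≤ ∫⁻ θ : UnitAddCircle, ENNReal.ofReal C ^ p.toReal
            * ‖reCLM.compLp ((θ.toCircle : ℂ) • f)‖ₑ ^ p.toReal := lintegral_mono hθ
      _ = ENNReal.ofReal C ^ p.toReal * (c * ‖f‖ₑ ^ p.toReal) := by
          rw [lintegral_const_mul' _ _
              (ENNReal.rpow_ne_top_of_nonneg hq.le ENNReal.ofReal_ne_top),
            lintegral_enorm_re_toCircle_smul_rpow hp0 hp f]
      _ = c * (ENNReal.ofReal C * ‖f‖ₑ) ^ p.toReal := by
          rw [ENNReal.mul_rpow_of_nonneg _ _ hq.le, mul_left_comm]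
  have hle : ‖g‖ₑ ≤ ENNReal.ofReal C * ‖f‖ₑ := (ENNReal.rpow_le_rpow_iff hq).mp
    ((ENNReal.mul_le_mul_iff_right (circleAbsReMoment_ne_zero _)
      (circleAbsReMoment_ne_top hq.le)).mp hint)
  rwa [← ofReal_norm, ← ofReal_norm, ← ENNReal.ofReal_mul hC,
    ENNReal.ofReal_le_ofReal_iff (by positivity)] at hle

theorem reCLM_compLp_ofRealCLM_compLp_add_I_smul (f g : Lp ℝ p μ) :
    reCLM.compLp (ofRealCLM.compLp f + I • ofRealCLM.compLp g) = f := by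
  ext1
  filter_upwards [reCLM.coeFn_compLp (ofRealCLM.compLp f + I • ofRealCLM.compLp g),
    coeFn_add (ofRealCLM.compLp f) (I • ofRealCLM.compLp g), coeFn_smul I (ofRealCLM.compLp g),
    ofRealCLM.coeFn_compLp f, ofRealCLM.coeFn_compLp g] with x h₁ h₂ h₃ h₄ h₅
  rw [h₁, h₂, Pi.add_apply, h₃, h₄, Pi.smul_apply, h₅]
  simp

theorem reCLM_compLp_ofRealCLM_compLp (f : Lp ℝ p μ) :
    reCLM.compLp (ofRealCLM.compLp f) = f := by
  ext1
  filter_upwards [reCLM.coeFn_compLp (ofRealCLM.compLp f), ofRealCLM.coeFn_compLp f]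
    with x h₁ h₂
  simp [h₁, h₂]

theorem imCLM_compLp_ofRealCLM_compLp (f : Lp ℝ p μ) :
    imCLM.compLp (ofRealCLM.compLp f) = 0 := by
  ext1
  filter_upwards [imCLM.coeFn_compLp (ofRealCLM.compLp f), ofRealCLM.coeFn_compLp f,
    coeFn_zero ℝ p μ] with x h₁ h₂ h₃
  rw [h₁, h₂, h₃]
  simp

theorem norm_ofRealCLM_compLp [Fact (1 ≤ p)] (f : Lp ℝ p μ) :
    ‖(ofRealCLM.compLp f : Lp ℂ p μ)‖ = ‖f‖ := by
  rw [norm_def, norm_def]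
  congr 1
  apply eLpNorm_congr_norm_ae
  filter_upwards [ofRealCLM.coeFn_compLp f] with x hx
  simp [hx]

end MeasureTheory.Lp

theorem ContinuousLinearMap.norm_le_of_norm_re_compLp_le {Ω Ω' : Type*} [MeasurableSpace Ω]
    [MeasurableSpace Ω'] {μ : Measure Ω} {ν : Measure Ω'} {p : ℝ≥0∞} [Fact (1 ≤ p)] (hp : p ≠ ∞)
    (A : Lp ℂ p μ →L[ℂ] Lp ℂ p ν) {C : ℝ} (hC : 0 ≤ C)
    (h : ∀ f, ‖reCLM.compLp (A f)‖ ≤ C * ‖reCLM.compLp f‖) : ‖A‖ ≤ C :=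
  A.opNorm_le_bound hC fun f => Lp.norm_le_of_forall_norm_re_smul_le hp hC fun w => by
    rw [← map_smul]
    exact h _

/-- The canonical complex-linear extension `T_ℂ (f + i g) = T f + i T g` of a bounded
real-linear operator `T` on `L^p(Ω, μ; ℝ)`, `1 ≤ p < ∞`, has the same norm as `T`. -/
theorem norm_complexification_eq
    {Ω : Type*} [MeasurableSpace Ω] (μ : Measure Ω)
    (p : ℝ≥0∞) [Fact (1 ≤ p)] (hp : p ≠ ∞)
    (T : Lp ℝ p μ →L[ℝ] Lp ℝ p μ)
    (Tc : Lp ℂ p μ →L[ℂ] Lp ℂ p μ)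
    (hTc : ∀ f : Lp ℂ p μ,
      Tc f = Complex.ofRealCLM.compLp (T (Complex.reCLM.compLp f))
        + Complex.I • Complex.ofRealCLM.compLp (T (Complex.imCLM.compLp f))) :
    ‖Tc‖ = ‖T‖ := by
  have hre : ∀ g, reCLM.compLp (Tc g) = T (reCLM.compLp g) := fun g => by
    rw [hTc, Lp.reCLM_compLp_ofRealCLM_compLp_add_I_smul]
  have hofReal : ∀ f, Tc (ofRealCLM.compLp f) = ofRealCLM.compLp (T f) := fun f => by
    have h0 : (ofRealCLM.compLp (0 : Lp ℝ p μ) : Lp ℂ p μ) = 0 := (ofRealCLM.compLpₗ p μ).map_zero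
    rw [hTc, Lp.reCLM_compLp_ofRealCLM_compLp, Lp.imCLM_compLp_ofRealCLM_compLp, map_zero, h0,
      smul_zero, add_zero]
  refine le_antisymm (Tc.norm_le_of_norm_re_compLp_le hp (norm_nonneg T) fun g => ?_)
    (T.opNorm_le_bound (norm_nonneg Tc) fun f => ?_)
  · rw [hre]
    exact T.le_opNorm _
  · calc ‖T f‖ = ‖Tc (ofRealCLM.compLp f)‖ := by rw [hofReal, Lp.norm_ofRealCLM_compLp]
      _ ≤ ‖Tc‖ * ‖f‖ := by
        simpa only [Lp.norm_ofRealCLM_compLp] using Tc.le_opNorm (ofRealCLM.compLp f)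
end

section
/- Let E = l^p_n with 1 < p < ∞, T : E → E a positive bounded operator, and define M : E⁺ → (E*)⁺ by Mα = T*((Tα)^{p-1}), where α^{p-1} means coordinatewise power. If α ∈ E⁺ satisfies ‖Tα‖_p = ‖T‖ ‖α‖_p, then Mα = ‖T‖^p · α^{p-1}. -/
open scoped ENNReal

/-!
Perturb the extremal vector in the direction of a basis vector `e`. Since `‖T‖` bounds `T`,
the function `t ↦ ‖T (α + t e)‖_p^p - ‖T‖^p ‖α + t e‖_p^p` is nonpositive, and it vanishes
at `t = 0` by extremality of `α`; hence its derivative at `0` vanishes. As `α` and `Tα` are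
nonnegative, the derivative of `t ↦ ‖x + t v‖_p^p` at `0` is `p ∑ₖ xₖ^{p-1} vₖ`, and
the vanishing derivative is exactly the `e`-coordinate of `Mα = ‖T‖^p α^{p-1}`.
-/

lemma hasDerivAt_abs_rpow_of_nonneg {r a : ℝ} (hr : 1 < r) (ha : 0 ≤ a) :
    HasDerivAt (fun t : ℝ => |t| ^ r) (r * a ^ (r - 1)) a := by
  convert hasDerivAt_abs_rpow a hr using 1
  rcases ha.eq_or_lt with rfl | ha
  · simp [Real.zero_rpow (by linarith : r - 1 ≠ 0)]
  · rw [abs_of_pos ha, mul_assoc, ← Real.rpow_add_one ha.ne']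
    ring_nf

lemma hasDerivAt_abs_add_mul_rpow {r c : ℝ} (hr : 1 < r) (hc : 0 ≤ c) (d : ℝ) :
    HasDerivAt (fun t : ℝ => |c + t * d| ^ r) (r * c ^ (r - 1) * d) 0 := by
  have hline : HasDerivAt (fun t : ℝ => c + t * d) d 0 := by
    simpa using ((hasDerivAt_id (0 : ℝ)).mul_const d).const_add c
  have hc' : 0 ≤ c + 0 * d := by simpa using hc
  have h := (hasDerivAt_abs_rpow_of_nonneg hr hc').comp 0 hline
  simp only [zero_mul, add_zero] at h
  exact h

namespace PiLp

variable {ι : Type*} [Fintype ι] {p : ℝ≥0∞}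

lemma norm_rpow_eq_sum_abs_rpow (hp : 0 < p.toReal) (y : PiLp p (fun _ : ι => ℝ)) :
    ‖y‖ ^ p.toReal = ∑ k, |y k| ^ p.toReal := by
  have hsum : 0 ≤ ∑ k, ‖y k‖ ^ p.toReal := by positivity
  rw [norm_eq_sum hp, ← Real.rpow_mul hsum, one_div, inv_mul_cancel₀ hp.ne', Real.rpow_one]
  simp only [Real.norm_eq_abs]

lemma hasDerivAt_norm_add_smul_rpow (hp : 1 < p.toReal) {x : PiLp p (fun _ : ι => ℝ)}
    (hx : ∀ k, 0 ≤ x k) (v : PiLp p (fun _ : ι => ℝ)) :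
    HasDerivAt (fun t : ℝ => ‖x + t • v‖ ^ p.toReal)
      (p.toReal * ∑ k, x k ^ (p.toReal - 1) * v k) 0 := by
  have hcoord : (fun t : ℝ => ‖x + t • v‖ ^ p.toReal)
      = fun t => ∑ k, |x k + t * v k| ^ p.toReal := by
    funext t
    rw [norm_rpow_eq_sum_abs_rpow (by linarith)]
    simp [smul_eq_mul]
  rw [hcoord, Finset.mul_sum]
  simp_rw [← mul_assoc]
  exact HasDerivAt.fun_sum fun k _ => hasDerivAt_abs_add_mul_rpow hp (hx k) (v k)

end PiLp

lemma ContinuousLinearMap.isLocalMax_norm_map_rpow_sub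
    {E F : Type*} [SeminormedAddCommGroup E] [NormedSpace ℝ E]
    [SeminormedAddCommGroup F] [NormedSpace ℝ F]
    (T : E →L[ℝ] F) {x : E} (hx : ‖T x‖ = ‖T‖ * ‖x‖) (v : E) {r : ℝ} (hr : 0 ≤ r) :
    IsLocalMax (fun t : ℝ => ‖T (x + t • v)‖ ^ r - ‖T‖ ^ r * ‖x + t • v‖ ^ r) 0 := by
  refine Filter.Eventually.of_forall fun t => ?_
  have hbound : ‖T (x + t • v)‖ ^ r ≤ ‖T‖ ^ r * ‖x + t • v‖ ^ r := by
    rw [← Real.mul_rpow (norm_nonneg _) (norm_nonneg _)]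
    exact Real.rpow_le_rpow (norm_nonneg _) (T.le_opNorm _) hr
  simp only [zero_smul, add_zero, hx, Real.mul_rpow (norm_nonneg _) (norm_nonneg _), sub_self]
  linarith

/-- Let `E = l^p_n`, `1 < p < ∞`, `T : E → E` a positive bounded operator, and
`M α = T*((Tα)^{p-1})` (in coordinates, `(Mα)_i = ∑_j T_{ji} (Tα)_j^{p-1}` with
`T_{ji} = (T e_i)_j`).  If `α ∈ E⁺` satisfies `‖Tα‖_p = ‖T‖‖α‖_p`, then
`Mα = ‖T‖^p · α^{p-1}`. -/
theorem extremal_vector_M_eq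
    {n : ℕ} (p : ℝ≥0∞) [Fact (1 ≤ p)] (hp1 : 1 < p) (hp2 : p ≠ ∞)
    (T : PiLp p (fun _ : Fin n => ℝ) →L[ℝ] PiLp p (fun _ : Fin n => ℝ))
    (hTpos : ∀ x : PiLp p (fun _ : Fin n => ℝ), (∀ i, 0 ≤ x i) → ∀ i, 0 ≤ T x i)
    (α : PiLp p (fun _ : Fin n => ℝ)) (hα : ∀ i, 0 ≤ α i)
    (hext : ‖T α‖ = ‖T‖ * ‖α‖) :
    ∀ i, ∑ j, T ((WithLp.equiv p (Fin n → ℝ)).symm (Pi.single i 1)) j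
        * (T α j) ^ (p.toReal - 1)
      = ‖T‖ ^ p.toReal * (α i) ^ (p.toReal - 1) := by
  intro i
  set e : PiLp p (fun _ : Fin n => ℝ) := (WithLp.equiv p (Fin n → ℝ)).symm (Pi.single i 1)
  have hp : 1 < p.toReal := by
    simpa using (ENNReal.toReal_lt_toReal ENNReal.one_ne_top hp2).mpr hp1
  have hmax := T.isLocalMax_norm_map_rpow_sub hext e (by linarith : 0 ≤ p.toReal)
  simp only [map_add, map_smul] at hmax
  have hderiv := hmax.hasDerivAt_eq_zero
    ((PiLp.hasDerivAt_norm_add_smul_rpow hp (hTpos α hα) (T e)).sub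
      ((PiLp.hasDerivAt_norm_add_smul_rpow hp hα e).const_mul (‖T‖ ^ p.toReal)))
  have he : ∑ k, α k ^ (p.toReal - 1) * e k = α i ^ (p.toReal - 1) := by
    simp [e]
  rw [he, sub_eq_zero, mul_left_comm, mul_right_inj' (by linarith)] at hderiv
  simpa only [mul_comm] using hderiv
end

section
/- Let 1 < p < ∞, E = l^p_n, T : E → E a positive operator, and M(α) = T*((Tα)^{p-1}). If α, β ∈ E⁺ satisfy α·β = 0 (disjoint supports) and Mα ≤ α^{p-1} coordinatewise, then α·(Mβ) = 0 and M(α+β) = Mα + Mβ. -/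
open scoped ENNReal

/-!
Write `q = p - 1` and `⟨γ, δ⟩ = ∑ γᵢ δᵢ`, so that `⟨γ, Mδ⟩ = ⟨Tγ, (Tδ)^q⟩`.
Since `Mα ≥ 0` and `Mα ≤ α^q`, `Mα` vanishes off the support of `α`, hence
`⟨Tβ, (Tα)^q⟩ = ⟨β, Mα⟩ = 0`: the nonnegative vectors `Tα` and `Tβ` have disjoint supports.
Then `(Tα + Tβ)^q = (Tα)^q + (Tβ)^q`, which gives additivity, and
`⟨α, Mβ⟩ = ⟨Tα, (Tβ)^q⟩ = 0`, a sum of nonnegative terms `αᵢ (Mβ)ᵢ`.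
-/

theorem Real.rpow_add_of_mul_eq_zero {a b q : ℝ} (hab : a * b = 0) (hq : q ≠ 0) :
    (a + b) ^ q = a ^ q + b ^ q := by
  rcases mul_eq_zero.mp hab with rfl | rfl <;> simp [Real.zero_rpow hq]

theorem Real.mul_rpow_eq_zero_of_mul_eq_zero {a b q : ℝ} (hab : a * b = 0) (hq : q ≠ 0) :
    a * b ^ q = 0 := by
  rcases mul_eq_zero.mp hab with rfl | rfl <;> simp [Real.zero_rpow hq]

namespace PiLp

variable {ι : Type*} [Fintype ι] [DecidableEq ι] {p : ℝ≥0∞}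

theorem linearMap_apply_eq_sum (T : PiLp p (fun _ : ι => ℝ) →ₗ[ℝ] PiLp p (fun _ : ι => ℝ))
    (γ : PiLp p (fun _ : ι => ℝ)) (j : ι) :
    T γ j = ∑ i, γ i * T (single p i 1) j := by
  conv_lhs => rw [← (basisFun p ℝ ι).sum_repr γ]
  simp [map_sum, Finset.sum_apply]

/-- The map `γ ↦ T*((Tγ)^q)` for the pairing `⟨γ, δ⟩ = ∑ γᵢ δᵢ`. -/
noncomputable def adjointRpow (T : PiLp p (fun _ : ι => ℝ) →ₗ[ℝ] PiLp p (fun _ : ι => ℝ))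
    (q : ℝ) (γ : PiLp p (fun _ : ι => ℝ)) (i : ι) : ℝ :=
  ∑ j, T (single p i 1) j * T γ j ^ q

variable (T : PiLp p (fun _ : ι => ℝ) →ₗ[ℝ] PiLp p (fun _ : ι => ℝ)) {q : ℝ}

theorem sum_mul_adjointRpow (γ δ : PiLp p (fun _ : ι => ℝ)) :
    ∑ i, γ i * adjointRpow T q δ i = ∑ j, T γ j * T δ j ^ q := by
  simp only [adjointRpow, Finset.mul_sum, linearMap_apply_eq_sum T γ, Finset.sum_mul]
  rw [Finset.sum_comm]
  simp only [mul_assoc]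

theorem adjointRpow_add {α β : PiLp p (fun _ : ι => ℝ)} (hq : q ≠ 0)
    (hTαβ : ∀ j, T α j * T β j = 0) (i : ι) :
    adjointRpow T q (α + β) i = adjointRpow T q α i + adjointRpow T q β i := by
  simp only [adjointRpow, ← Finset.sum_add_distrib, ← mul_add, map_add, PiLp.add_apply,
    Real.rpow_add_of_mul_eq_zero (hTαβ _) hq]

variable {T}

theorem adjointRpow_nonneg
    (hT : ∀ x : PiLp p (fun _ : ι => ℝ), (∀ i, 0 ≤ x i) → ∀ i, 0 ≤ T x i)
    {γ : PiLp p (fun _ : ι => ℝ)} (hγ : ∀ i, 0 ≤ γ i) (i : ι) :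
    0 ≤ adjointRpow T q γ i := by
  have hsingle : ∀ j, 0 ≤ (single p i 1 : PiLp p (fun _ : ι => ℝ)) j := fun j => by
    rw [single_apply]; split_ifs <;> norm_num
  exact Finset.sum_nonneg fun j _ =>
    mul_nonneg (hT _ hsingle j) (Real.rpow_nonneg (hT γ hγ j) q)

theorem mul_adjointRpow_eq_zero
    (hT : ∀ x : PiLp p (fun _ : ι => ℝ), (∀ i, 0 ≤ x i) → ∀ i, 0 ≤ T x i)
    {α β : PiLp p (fun _ : ι => ℝ)} (hq : q ≠ 0)
    (hα : ∀ i, 0 ≤ α i) (hβ : ∀ i, 0 ≤ β i) (hTαβ : ∀ j, T α j * T β j = 0) (i : ι) :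
    α i * adjointRpow T q β i = 0 := by
  have hsum : ∑ i, α i * adjointRpow T q β i = 0 := by
    rw [sum_mul_adjointRpow]
    exact Finset.sum_eq_zero fun j _ => Real.mul_rpow_eq_zero_of_mul_eq_zero (hTαβ j) hq
  exact (Finset.sum_eq_zero_iff_of_nonneg fun i _ =>
    mul_nonneg (hα i) (adjointRpow_nonneg hT hβ i)).mp hsum i (Finset.mem_univ i)

theorem apply_mul_apply_eq_zero_of_adjointRpow_le
    (hT : ∀ x : PiLp p (fun _ : ι => ℝ), (∀ i, 0 ≤ x i) → ∀ i, 0 ≤ T x i)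
    {α β : PiLp p (fun _ : ι => ℝ)} (hq : 0 < q)
    (hα : ∀ i, 0 ≤ α i) (hβ : ∀ i, 0 ≤ β i) (hdisj : ∀ i, α i * β i = 0)
    (hMα : ∀ i, adjointRpow T q α i ≤ α i ^ q) (j : ι) :
    T α j * T β j = 0 := by
  have hβMα : ∀ i, β i * adjointRpow T q α i = 0 := fun i => by
    rcases mul_eq_zero.mp (hdisj i) with hαi | hβi
    · have hle := hMα i
      rw [hαi, Real.zero_rpow hq.ne'] at hle
      rw [le_antisymm hle (adjointRpow_nonneg hT hα i), mul_zero]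
    · rw [hβi, zero_mul]
  have hsum : ∑ j, T β j * T α j ^ q = 0 := by
    rw [← sum_mul_adjointRpow]
    exact Finset.sum_eq_zero fun i _ => hβMα i
  have hterm := (Finset.sum_eq_zero_iff_of_nonneg fun j _ =>
    mul_nonneg (hT β hβ j) (Real.rpow_nonneg (hT α hα j) q)).mp hsum j (Finset.mem_univ j)
  rcases mul_eq_zero.mp hterm with hβj | hαj
  · rw [hβj, mul_zero]
  · rw [(Real.rpow_eq_zero (hT α hα j) hq.ne').mp hαj, zero_mul]

end PiLp

/-- Let `E = l^p_n`, `1 < p < ∞`, `T` a positive operator and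
`M γ = T*((Tγ)^{p-1})`.  If `α, β ∈ E⁺` have disjoint supports (`α·β = 0`) and
`Mα ≤ α^{p-1}` coordinatewise, then `α·(Mβ) = 0` and `M(α+β) = Mα + Mβ`. -/
theorem M_additive_on_disjoint
    {n : ℕ} (p : ℝ≥0∞) [Fact (1 ≤ p)] (hp1 : 1 < p) (hp2 : p ≠ ∞)
    (T : PiLp p (fun _ : Fin n => ℝ) →L[ℝ] PiLp p (fun _ : Fin n => ℝ))
    (hTpos : ∀ x : PiLp p (fun _ : Fin n => ℝ), (∀ i, 0 ≤ x i) → ∀ i, 0 ≤ T x i)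
    (M : PiLp p (fun _ : Fin n => ℝ) → Fin n → ℝ)
    (hM : ∀ γ i, M γ i
      = ∑ j, T ((WithLp.equiv p (Fin n → ℝ)).symm (Pi.single i 1)) j
          * (T γ j) ^ (p.toReal - 1))
    (α β : PiLp p (fun _ : Fin n => ℝ))
    (hα : ∀ i, 0 ≤ α i) (hβ : ∀ i, 0 ≤ β i)
    (hdisj : ∀ i, α i * β i = 0)
    (hMα : ∀ i, M α i ≤ (α i) ^ (p.toReal - 1)) :
    (∀ i, α i * M β i = 0) ∧ (∀ i, M (α + β) i = M α i + M β i) := by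
  have hq : 0 < p.toReal - 1 := by
    have := (ENNReal.toReal_lt_toReal ENNReal.one_ne_top hp2).mpr hp1
    rw [ENNReal.toReal_one] at this
    linarith
  obtain rfl : M = PiLp.adjointRpow T.toLinearMap (p.toReal - 1) := by
    ext γ i
    simp [hM, PiLp.adjointRpow, ← PiLp.toLp_single]
  have hTαβ := PiLp.apply_mul_apply_eq_zero_of_adjointRpow_le hTpos hq hα hβ hdisj hMα
  exact ⟨PiLp.mul_adjointRpow_eq_zero hTpos hq.ne' hα hβ hTαβ,
    PiLp.adjointRpow_add _ hq.ne' hTαβ⟩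
end

section
/- Let 1 < p < ∞, E = l^p_n, and T : E → E a positive contraction. Then there exists u ∈ E⁺ with all coordinates strictly positive such that M(u) := T*((Tu)^{p-1}) ≤ u^{p-1} coordinatewise. -/
/-!
Write `T` as a nonnegative matrix `A`. A maximiser `v` of `‖A y‖_p^p` on the nonnegative part of
the unit sphere of `ℓ^p` is nonnegative and nonzero, and the one-sided first-order condition at
`v` in the direction of each basis vector reads `Aᵀ (A v)^(p-1) ≤ λ v^(p-1)` with
`λ = ‖A v‖_p^p ≤ 1`. If `v` vanishes on a set `Z` of coordinates, let `K` be the zero set of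
`A v`: this inequality forces `A = 0` on `Kᶜ × Z`, and `(A v)_K = 0` forces `A = 0` on `K × Zᶜ`.
So `A` is block diagonal, its `K × Z` block is a positive contraction on fewer coordinates, and
induction gives it a strictly positive subinvariant vector `w`; gluing `w` on `Z` to `v` off `Z`
gives one for `A`.
-/

open scoped ENNReal
open Finset Matrix

theorem HasDerivAt.nonpos_of_isMaxOn_Ici {φ : ℝ → ℝ} {D a : ℝ} (hφ : HasDerivAt φ D a)
    (hmax : IsMaxOn φ (Set.Ici a) a) : D ≤ 0 := by
  have h1 : (1 : ℝ) ∈ posTangentConeAt (Set.Ici a) a :=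
    mem_posTangentConeAt_of_segment_subset (by
      rw [segment_eq_Icc (by linarith)]; exact Set.Icc_subset_Ici_self)
  simpa using hmax.localize.hasFDerivWithinAt_nonpos hφ.hasDerivWithinAt h1

section

variable {ι : Type*} [Fintype ι]

theorem hasDerivAt_sum_rpow_add_smul {r : ℝ} (hr : 1 ≤ r)
    (x y : ι → ℝ) :
    HasDerivAt (fun t : ℝ => ∑ i, (x + t • y) i ^ r) (r * ∑ i, y i * x i ^ (r - 1)) 0 := by
  have hline (i : ι) : HasDerivAt (fun t : ℝ => x i + t * y i) (y i) 0 := by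
    simpa using ((hasDerivAt_id (0 : ℝ)).mul_const (y i)).const_add (x i)
  refine (HasDerivAt.fun_sum (u := univ) fun i _ =>
    (hline i).rpow_const (p := r) (Or.inr hr)).congr_deriv ?_
  simp [mul_sum, mul_comm, mul_assoc]

theorem sum_rpow_smul {r c : ℝ} (hc : 0 ≤ c) {x : ι → ℝ} (hx : 0 ≤ x) :
    ∑ i, (c • x) i ^ r = c ^ r * ∑ i, x i ^ r := by
  simp [Real.mul_rpow hc (hx _), mul_sum]

theorem isCompact_nonneg_sum_rpow_eq_one {r : ℝ} (hr : 0 < r) :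
    IsCompact {x : ι → ℝ | 0 ≤ x ∧ ∑ i, x i ^ r = 1} := by
  refine (isCompact_Icc (a := 0) (b := 1)).of_isClosed_subset ?_ ?_
  · exact (isClosed_le continuous_const continuous_id).inter (isClosed_eq
      (continuous_finsetSum _ fun i _ => (Real.continuous_rpow_const hr.le).comp
        (continuous_apply i)) continuous_const)
  · rintro x ⟨hx, hsum⟩
    refine ⟨hx, fun i => not_lt.1 fun h => ?_⟩
    have : x i ^ r ≤ 1 :=
      hsum ▸ single_le_sum (fun i _ => Real.rpow_nonneg (hx i) r) (mem_univ i)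
    exact this.not_gt (Real.one_lt_rpow h hr)

end

namespace Matrix

variable {ι κ : Type*}

theorem submatrix_sumCompl_eq_fromBlocks (A : Matrix κ ι ℝ) (s : κ → Prop) (p : ι → Prop)
    [DecidablePred s] [DecidablePred p]
    (h₁₂ : ∀ j i, s j → ¬ p i → A j i = 0) (h₂₁ : ∀ j i, ¬ s j → p i → A j i = 0) :
    A.submatrix (Equiv.sumCompl s) (Equiv.sumCompl p) =
      fromBlocks (A.submatrix (↑) (↑)) 0 0 (A.submatrix (↑) (↑)) := by
  ext (j | j) (i | i)
  · rfl
  · exact h₁₂ _ _ j.2 i.2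
  · exact h₂₁ _ _ j.2 i.2
  · rfl

variable [Fintype ι]

theorem mulVec_nonneg {A : Matrix κ ι ℝ} (hA : ∀ j i, 0 ≤ A j i) {x : ι → ℝ} (hx : 0 ≤ x) :
    0 ≤ A *ᵥ x :=
  fun j => sum_nonneg fun i _ => mul_nonneg (hA j i) (hx i)

theorem apply_eq_zero_of_mulVec_apply_eq_zero {A : Matrix κ ι ℝ} (hA : ∀ j i, 0 ≤ A j i)
    {x : ι → ℝ} (hx : 0 ≤ x) {j : κ} {i : ι} (hj : (A *ᵥ x) j = 0) (hi : x i ≠ 0) :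
    A j i = 0 := by
  have := (sum_eq_zero_iff_of_nonneg fun i _ => mul_nonneg (hA j i) (hx i)).1 hj i (mem_univ i)
  exact (mul_eq_zero.1 this).resolve_right hi

variable [Fintype κ]

/-- For nonnegative `A` and `1 ≤ r`, this says that `A` is a contraction of `ℓ^r`. -/
def IsConeContraction (A : Matrix κ ι ℝ) (r : ℝ) : Prop :=
  ∀ x : ι → ℝ, 0 ≤ x → ∑ j, (A *ᵥ x) j ^ r ≤ ∑ i, x i ^ r

/-- The paper's `M(u) ≤ u^q` for `M(u) = Aᵀ ((A u)^q)`, powers taken coordinatewise. -/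
def IsSubinvariant (A : Matrix κ ι ℝ) (q : ℝ) (u : ι → ℝ) : Prop :=
  ∀ i, ∑ j, A j i * (A *ᵥ u) j ^ q ≤ u i ^ q

theorem IsSubinvariant.apply_eq_zero {A : Matrix κ ι ℝ} (hA : ∀ j i, 0 ≤ A j i) {q : ℝ}
    (hq : q ≠ 0) {u : ι → ℝ} (hu : 0 ≤ u) (h : A.IsSubinvariant q u) {j : κ} {i : ι}
    (hi : u i = 0) (hj : (A *ᵥ u) j ≠ 0) : A j i = 0 := by
  have hterm : ∀ j ∈ univ, 0 ≤ A j i * (A *ᵥ u) j ^ q :=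
    fun j _ => mul_nonneg (hA j i) (Real.rpow_nonneg (mulVec_nonneg hA hu j) q)
  have hle := h i
  rw [hi, Real.zero_rpow hq] at hle
  have := (sum_eq_zero_iff_of_nonneg hterm).1 (hle.antisymm (sum_nonneg hterm)) j (mem_univ j)
  exact (mul_eq_zero.1 this).resolve_right
    (Real.rpow_pos_of_pos ((mulVec_nonneg hA hu j).lt_of_ne' hj) q).ne'

section Blocks

variable {ι' κ' ι₁ ι₂ κ₁ κ₂ : Type*} [Fintype ι'] [Fintype κ'] [Fintype ι₁] [Fintype ι₂]
  [Fintype κ₁] [Fintype κ₂]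

theorem isSubinvariant_submatrix_equiv_iff {A : Matrix κ ι ℝ} {q : ℝ} {u : ι → ℝ}
    (e : κ' ≃ κ) (f : ι' ≃ ι) :
    (A.submatrix e f).IsSubinvariant q (u ∘ f) ↔ A.IsSubinvariant q u := by
  simp only [IsSubinvariant, submatrix_mulVec_equiv, Function.comp_assoc, f.self_comp_symm,
    Function.comp_id, submatrix_apply, Function.comp_apply]
  rw [f.forall_congr_left]
  simp only [Equiv.apply_symm_apply]
  exact forall_congr' fun i => by rw [e.sum_comp (fun j => A j i * (A *ᵥ u) j ^ q)]

theorem IsConeContraction.submatrix_equiv {A : Matrix κ ι ℝ} {r : ℝ} (hA : A.IsConeContraction r)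
    (e : κ' ≃ κ) (f : ι' ≃ ι) : (A.submatrix e f).IsConeContraction r := by
  intro x hx
  rw [submatrix_mulVec_equiv]
  simp only [Function.comp_apply]
  rw [e.sum_comp (fun j => (A *ᵥ (x ∘ f.symm)) j ^ r), ← f.symm.sum_comp (fun i => x i ^ r)]
  exact hA _ fun i => hx _

theorem isSubinvariant_fromBlocks_iff {A₁ : Matrix κ₁ ι₁ ℝ} {A₂ : Matrix κ₂ ι₂ ℝ} {q : ℝ}
    {u : ι₁ ⊕ ι₂ → ℝ} :
    (fromBlocks A₁ 0 0 A₂).IsSubinvariant q u ↔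
      A₁.IsSubinvariant q (u ∘ Sum.inl) ∧ A₂.IsSubinvariant q (u ∘ Sum.inr) := by
  simp [IsSubinvariant, fromBlocks_mulVec, Fintype.sum_sum_type, Sum.forall]

theorem IsConeContraction.fromBlocks₁₁ {A₁ : Matrix κ₁ ι₁ ℝ} {A₂ : Matrix κ₂ ι₂ ℝ} {r : ℝ}
    (hA : (fromBlocks A₁ 0 0 A₂).IsConeContraction r) (hr : r ≠ 0) : A₁.IsConeContraction r := by
  intro x hx
  have := hA (Sum.elim x 0) (by rintro (i | i); exacts [hx i, le_rfl])
  simpa [fromBlocks_mulVec, Fintype.sum_sum_type, Real.zero_rpow hr] using this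

end Blocks

theorem exists_sum_rpow_mulVec_le_mul [Nonempty ι] {r : ℝ} (hr : 0 < r) {A : Matrix κ ι ℝ}
    (hA : ∀ j i, 0 ≤ A j i) :
    ∃ v : ι → ℝ, 0 ≤ v ∧ ∑ i, v i ^ r = 1 ∧
      ∀ y, 0 ≤ y → ∑ j, (A *ᵥ y) j ^ r ≤ (∑ j, (A *ᵥ v) j ^ r) * ∑ i, y i ^ r := by
  classical
  obtain ⟨i₀⟩ := ‹Nonempty ι›
  have hS : (Pi.single i₀ 1 : ι → ℝ) ∈ {x : ι → ℝ | 0 ≤ x ∧ ∑ i, x i ^ r = 1} :=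
    ⟨Pi.single_nonneg.2 zero_le_one, by simp [Pi.single_apply, apply_ite (· ^ r),
      Real.zero_rpow hr.ne']⟩
  have hf : Continuous fun x : ι → ℝ => ∑ j, (A *ᵥ x) j ^ r :=
    continuous_finsetSum _ fun j _ => (Real.continuous_rpow_const hr.le).comp
      ((continuous_apply j).comp (continuous_const.matrix_mulVec continuous_id))
  obtain ⟨v, ⟨hv, hv1⟩, hmax⟩ :=
    (isCompact_nonneg_sum_rpow_eq_one hr).exists_isMaxOn ⟨_, hS⟩ hf.continuousOn
  refine ⟨v, hv, hv1, fun y hy => ?_⟩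
  rcases (sum_nonneg fun i _ => Real.rpow_nonneg (hy i) r : 0 ≤ ∑ i, y i ^ r).eq_or_lt
    with hs | hs
  · have hy0 : y = 0 := funext fun i => (Real.rpow_eq_zero (hy i) hr.ne').1 <|
      (sum_eq_zero_iff_of_nonneg fun i _ => Real.rpow_nonneg (hy i) r).1 hs.symm i (mem_univ i)
    rw [← hs, mul_zero]
    simp [hy0, Real.zero_rpow hr.ne']
  set c := (∑ i, y i ^ r) ^ (-r⁻¹)
  have hc : 0 ≤ c := Real.rpow_nonneg hs.le _
  have hcr : c ^ r = (∑ i, y i ^ r)⁻¹ := by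
    rw [← Real.rpow_mul hs.le, neg_mul, inv_mul_cancel₀ hr.ne', Real.rpow_neg_one]
  have hcy : c • y ∈ {x : ι → ℝ | 0 ≤ x ∧ ∑ i, x i ^ r = 1} :=
    ⟨smul_nonneg hc hy, by rw [sum_rpow_smul hc hy, hcr, inv_mul_cancel₀ hs.ne']⟩
  have : ∑ j, (A *ᵥ (c • y)) j ^ r ≤ ∑ j, (A *ᵥ v) j ^ r := hmax hcy
  rw [mulVec_smul, sum_rpow_smul hc (mulVec_nonneg hA hy), hcr, inv_mul_le_iff₀ hs] at this
  linarith

theorem exists_nonneg_ne_zero_isSubinvariant [Nonempty ι] {r : ℝ} (hr : 1 < r)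
    {A : Matrix κ ι ℝ} (hA : ∀ j i, 0 ≤ A j i) (hAc : A.IsConeContraction r) :
    ∃ v : ι → ℝ, 0 ≤ v ∧ v ≠ 0 ∧ A.IsSubinvariant (r - 1) v := by
  classical
  obtain ⟨v, hv, hv1, hmax⟩ := exists_sum_rpow_mulVec_le_mul (by linarith) hA
  set lam := ∑ j, (A *ᵥ v) j ^ r
  have hlam : lam ≤ 1 := hv1 ▸ hAc v hv
  refine ⟨v, hv, fun h => by simp [h, Real.zero_rpow (by linarith : r ≠ 0)] at hv1, fun i => ?_⟩
  set e : ι → ℝ := Pi.single i 1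
  have hφ := (hasDerivAt_sum_rpow_add_smul hr.le (A *ᵥ v) (A *ᵥ e)).sub
    ((hasDerivAt_sum_rpow_add_smul hr.le v e).const_mul lam)
  have hφmax : IsMaxOn (fun t : ℝ => ∑ j, (A *ᵥ v + t • A *ᵥ e) j ^ r -
      lam * ∑ l, (v + t • e) l ^ r) (Set.Ici 0) 0 := by
    refine isMaxOn_iff.2 fun t ht => ?_
    have := hmax (v + t • e) (add_nonneg hv (smul_nonneg ht (Pi.single_nonneg.2 zero_le_one)))
    simp only [mulVec_add, mulVec_smul] at this
    simpa only [zero_smul, add_zero, hv1, mul_one, lam, sub_self, sub_nonpos] using this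
  have hD := hφ.nonpos_of_isMaxOn_Ici hφmax
  simp only [e, mulVec_single_one, col_apply, Pi.single_apply, ite_mul, one_mul, zero_mul,
    sum_ite_eq', mem_univ, if_true, mul_left_comm lam r, ← mul_sub] at hD
  calc ∑ j, A j i * (A *ᵥ v) j ^ (r - 1) ≤ lam * v i ^ (r - 1) :=
        sub_nonpos.1 (nonpos_of_mul_nonpos_right hD (by linarith))
    _ ≤ v i ^ (r - 1) := mul_le_of_le_one_left (Real.rpow_nonneg (hv i) _) hlam

theorem exists_pos_isSubinvariant {r : ℝ} (hr : 1 < r) {A : Matrix κ ι ℝ}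
    (hA : ∀ j i, 0 ≤ A j i) (hAc : A.IsConeContraction r) :
    ∃ u : ι → ℝ, (∀ i, 0 < u i) ∧ A.IsSubinvariant (r - 1) u := by
  classical
  induction hn : Fintype.card ι using Nat.strong_induction_on generalizing ι κ with
  | _ n ih =>
    rcases isEmpty_or_nonempty ι with hι | hι
    · exact ⟨0, isEmptyElim, isEmptyElim⟩
    obtain ⟨v, hv, hv_ne, hvA⟩ := exists_nonneg_ne_zero_isSubinvariant hr hA hAc
    obtain ⟨i₀, hi₀⟩ := Function.ne_iff.1 hv_ne
    let Z := fun i => v i = 0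
    let K := fun j => (A *ᵥ v) j = 0
    have hblocks := submatrix_sumCompl_eq_fromBlocks A K Z
      (fun j i hj hi => apply_eq_zero_of_mulVec_apply_eq_zero hA hv hj hi)
      (fun j i hj hi => hvA.apply_eq_zero hA (by linarith) hv hi hj)
    have hAc' := hAc.submatrix_equiv (Equiv.sumCompl K) (Equiv.sumCompl Z)
    rw [hblocks] at hAc'
    obtain ⟨w, hw, hwA⟩ := ih _ (hn ▸ Fintype.card_subtype_lt hi₀) (fun _ _ => hA _ _)
      (hAc'.fromBlocks₁₁ (by linarith)) rfl
    have hvA' := (isSubinvariant_submatrix_equiv_iff (Equiv.sumCompl K) (Equiv.sumCompl Z)).2 hvA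
    rw [hblocks, isSubinvariant_fromBlocks_iff] at hvA'
    refine ⟨Sum.elim w (v ∘ (↑)) ∘ (Equiv.sumCompl Z).symm, fun i => ?_, ?_⟩
    · by_cases hi : Z i
      · simpa [Equiv.sumCompl_symm_apply_of_pos hi] using hw ⟨i, hi⟩
      · simpa [Equiv.sumCompl_symm_apply_of_neg hi] using (hv i).lt_of_ne' hi
    · rw [← isSubinvariant_submatrix_equiv_iff (Equiv.sumCompl K) (Equiv.sumCompl Z), hblocks,
        isSubinvariant_fromBlocks_iff]
      simp only [Function.comp_assoc, Equiv.symm_comp_self, Function.comp_id, Sum.elim_comp_inl,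
        Sum.elim_comp_inr]
      exact ⟨hwA, hvA'.2⟩

end Matrix

namespace PiLp

variable {ι κ : Type*} [Fintype ι] [Fintype κ] {p : ℝ≥0∞}

theorem norm_rpow_eq_sum [Fact (1 ≤ p)] (hp : p ≠ ∞) (x : PiLp p (fun _ : ι => ℝ)) :
    ‖x‖ ^ p.toReal = ∑ i, ‖x i‖ ^ p.toReal := by
  have hp0 : 0 < p.toReal := ENNReal.toReal_pos (by have := Fact.out (p := 1 ≤ p); positivity) hp
  rw [norm_eq_sum hp0, one_div, Real.rpow_inv_rpow (sum_nonneg fun i _ => by positivity) hp0.ne']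

variable [DecidableEq ι]

theorem toMatrix_apply_nonneg {T : PiLp p (fun _ : ι => ℝ) →L[ℝ] PiLp p (fun _ : κ => ℝ)}
    (hTpos : ∀ x : PiLp p (fun _ : ι => ℝ), (∀ i, 0 ≤ x i) → ∀ j, 0 ≤ T x j) (j : κ) (i : ι) :
    0 ≤ LinearMap.toMatrix (basisFun p ℝ ι) (basisFun p ℝ κ) T.toLinearMap j i := by
  simpa [LinearMap.toMatrix_apply] using
    hTpos (single p i 1) (fun l => by by_cases h : l = i <;> simp [h]) j

theorem toMatrix_mulVec_ofLp (T : PiLp p (fun _ : ι => ℝ) →ₗ[ℝ] PiLp p (fun _ : κ => ℝ))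
    (x : PiLp p (fun _ : ι => ℝ)) :
    LinearMap.toMatrix (basisFun p ℝ ι) (basisFun p ℝ κ) T *ᵥ x.ofLp = (T x).ofLp :=
  LinearMap.toMatrix_mulVec_repr _ _ T x

theorem isConeContraction_toMatrix [Fact (1 ≤ p)] (hp : p ≠ ∞)
    {T : PiLp p (fun _ : ι => ℝ) →L[ℝ] PiLp p (fun _ : κ => ℝ)}
    (hTpos : ∀ x : PiLp p (fun _ : ι => ℝ), (∀ i, 0 ≤ x i) → ∀ j, 0 ≤ T x j) (hT : ‖T‖ ≤ 1) :
    (LinearMap.toMatrix (basisFun p ℝ ι) (basisFun p ℝ κ) T.toLinearMap).IsConeContraction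
      p.toReal := by
  intro x hx
  have hTx := T.le_of_opNorm_le hT (WithLp.toLp p x)
  rw [toMatrix_mulVec_ofLp]
  calc ∑ j, (T (WithLp.toLp p x)) j ^ p.toReal = ‖T (WithLp.toLp p x)‖ ^ p.toReal := by
        rw [norm_rpow_eq_sum hp]
        exact sum_congr rfl fun j _ => by rw [Real.norm_of_nonneg (hTpos _ hx j)]
    _ ≤ ‖WithLp.toLp p x‖ ^ p.toReal := by gcongr; simpa using hTx
    _ = ∑ i, x i ^ p.toReal := by
        rw [norm_rpow_eq_sum hp]
        exact sum_congr rfl fun i _ => by rw [WithLp.ofLp_toLp, Real.norm_of_nonneg (hx i)]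

end PiLp

/-- Let `E = l^p_n`, `1 < p < ∞`, and `T : E → E` a positive contraction.  Then there
exists `u ∈ E⁺` with all coordinates strictly positive such that
`M(u) = T*((Tu)^{p-1}) ≤ u^{p-1}` coordinatewise. -/
theorem exists_strictly_positive_subinvariant
    {n : ℕ} (p : ℝ≥0∞) [Fact (1 ≤ p)] (hp1 : 1 < p) (hp2 : p ≠ ∞)
    (T : PiLp p (fun _ : Fin n => ℝ) →L[ℝ] PiLp p (fun _ : Fin n => ℝ))
    (hTpos : ∀ x : PiLp p (fun _ : Fin n => ℝ), (∀ i, 0 ≤ x i) → ∀ i, 0 ≤ T x i)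
    (hTcontr : ‖T‖ ≤ 1) :
    ∃ u : PiLp p (fun _ : Fin n => ℝ), (∀ i, 0 < u i) ∧
      ∀ i, ∑ j, T ((WithLp.equiv p (Fin n → ℝ)).symm (Pi.single i 1)) j
          * (T u j) ^ (p.toReal - 1)
        ≤ (u i) ^ (p.toReal - 1) := by
  have hr : 1 < p.toReal := by simpa using (ENNReal.toReal_lt_toReal ENNReal.one_ne_top hp2).2 hp1
  obtain ⟨u, hu, huA⟩ := Matrix.exists_pos_isSubinvariant hr (PiLp.toMatrix_apply_nonneg hTpos)
    (PiLp.isConeContraction_toMatrix hp2 hTpos hTcontr)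
  refine ⟨WithLp.toLp p u, hu, fun i => ?_⟩
  have hTu := PiLp.toMatrix_mulVec_ofLp T.toLinearMap (WithLp.toLp p u)
  rw [WithLp.ofLp_toLp] at hTu
  simpa [hTu, LinearMap.toMatrix_apply] using huA i
end

section
/- Let (A, ≤) be a directed partially ordered set. Then there exists a multiplicative linear functional LIM on l^∞(A;ℂ) such that for every real-valued f ∈ l^∞(A;ℝ): liminf_{α∈A} f(α) ≤ LIM(f) ≤ limsup_{α∈A} f(α), where liminf_{α} f(α) = sup_β inf_{α≥β} f(α) and limsup is defined dually. -/
open Filter Topology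
open scoped ENNReal

/-!
Fix an ultrafilter `U` finer than `atTop`. A bounded function takes values in a compact ball,
so it converges along `U`; limits along `U` are unique and respect sums and products, so
`f ↦ lim_U f` is a character of `ℓ^∞`. The limit of `re ∘ f` along `U` is a cluster point of
`re ∘ f` along `atTop`, hence lies between its `liminf` and `limsup`.
-/

namespace lp

variable {α : Type*}

theorem exists_tendsto_ultrafilter {E : Type*} [NormedAddCommGroup E] [ProperSpace E]
    (U : Ultrafilter α) (f : lp (fun _ : α => E) ∞) : ∃ c, Tendsto f U (𝓝 c) := by
  have hball : Tendsto f U (𝓟 (Metric.closedBall 0 ‖f‖)) :=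
    tendsto_principal.2 <| Eventually.of_forall fun a => by
      simpa using norm_apply_le_norm ENNReal.top_ne_zero f a
  obtain ⟨c, -, hc⟩ := (isCompact_closedBall (0 : E) ‖f‖).ultrafilter_le_nhds (U.map f) hball
  exact ⟨c, hc⟩

variable {𝕜 : Type*} [NormedField 𝕜] [ProperSpace 𝕜] (U : Ultrafilter α)

theorem tendsto_lim_map_ultrafilter (f : lp (fun _ : α => 𝕜) ∞) :
    Tendsto f U (𝓝 (lim (map f U))) :=
  le_nhds_lim (exists_tendsto_ultrafilter U f)

variable (𝕜) in
noncomputable def ultrafilterLim : lp (fun _ : α => 𝕜) ∞ →ₐ[𝕜] 𝕜 where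
  toFun f := lim (map f U)
  map_one' := tendsto_nhds_unique (tendsto_lim_map_ultrafilter U 1) <| by
    rw [infty_coeFn_one]; exact tendsto_const_nhds
  map_mul' f g := tendsto_nhds_unique (tendsto_lim_map_ultrafilter U (f * g)) <| by
    rw [infty_coeFn_mul]
    exact (tendsto_lim_map_ultrafilter U f).mul (tendsto_lim_map_ultrafilter U g)
  map_zero' := tendsto_nhds_unique (tendsto_lim_map_ultrafilter U 0) <| by
    rw [coeFn_zero]; exact tendsto_const_nhds
  map_add' f g := tendsto_nhds_unique (tendsto_lim_map_ultrafilter U (f + g)) <| by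
    rw [coeFn_add]
    exact (tendsto_lim_map_ultrafilter U f).add (tendsto_lim_map_ultrafilter U g)
  commutes' c := tendsto_nhds_unique (tendsto_lim_map_ultrafilter U _) tendsto_const_nhds

theorem tendsto_ultrafilterLim (f : lp (fun _ : α => 𝕜) ∞) :
    Tendsto f U (𝓝 (ultrafilterLim 𝕜 U f)) :=
  tendsto_lim_map_ultrafilter U f

end lp

/-- On a directed partially ordered set `A`, there exists a multiplicative linear
functional `LIM` on `l^∞(A;ℂ)` such that for every real-valued bounded function `f`,
`liminf_{α} f(α) ≤ LIM f ≤ limsup_{α} f(α)` (the limits taken along the directedness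
filter `atTop`). -/
theorem exists_multiplicative_banach_limit
    (A : Type*) [PartialOrder A] [IsDirected A (· ≤ ·)] [Nonempty A] :
    ∃ LIM : lp (fun _ : A => ℂ) ∞ →ₐ[ℂ] ℂ,
      ∀ f : lp (fun _ : A => ℂ) ∞, (∀ a, (f a).im = 0) →
        (LIM f).im = 0 ∧
        liminf (fun a => (f a).re) atTop ≤ (LIM f).re ∧
        (LIM f).re ≤ limsup (fun a => (f a).re) atTop := by
  let U := Ultrafilter.of (atTop : Filter A)
  refine ⟨lp.ultrafilterLim ℂ U, fun f hf => ?_⟩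
  have hlim := lp.tendsto_ultrafilterLim U f
  have hre := (Complex.continuous_re.tendsto _).comp hlim
  have hcluster := hre.mapClusterPt.mono (Ultrafilter.of_le atTop)
  have hbound : ∀ a, |(f a).re| ≤ ‖f‖ := fun a =>
    (Complex.abs_re_le_norm _).trans (lp.norm_apply_le_norm ENNReal.top_ne_zero f a)
  refine ⟨tendsto_nhds_unique ((Complex.continuous_im.tendsto _).comp hlim) ?_,
    hcluster.liminf_le (isBoundedUnder_of ⟨-‖f‖, fun a => (abs_le.1 (hbound a)).1⟩),
    hcluster.le_limsup (isBoundedUnder_of ⟨‖f‖, fun a => (abs_le.1 (hbound a)).2⟩)⟩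
  simp [Function.comp_def, hf]
end

section
/- An ultraproduct (with respect to a generalized Banach limit) of a net of L^p-spaces, 1 ≤ p < ∞, is itself an abstract L^p-space; that is, it is a Banach lattice in which f, g ≥ 0 with f ∧ g = 0 implies ‖f+g‖^p = ‖f‖^p + ‖g‖^p. -/
/-!
Replace `f, g` by the componentwise disjoint families `f - f ⊓ g` and `g - f ⊓ g`. The
functional `x ↦ L (a ↦ ‖x a‖)` is a seminorm on bounded families, so it does not see the
perturbations by `f ⊓ g`, on which it vanishes. For the disjoint families the `L^p` identity
holds in every component, and it passes through `L`, which is additive and commutes with the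
continuous map `t ↦ t ^ p`.
-/

open Filter MeasureTheory
open scoped ENNReal

/-- A function `A → ℝ` is bounded. -/
def BddFun {A : Type*} (f : A → ℝ) : Prop := ∃ C, ∀ a, |f a| ≤ C

/-- In a lattice-ordered group `u ⊓ v = 0` already forces `0 ≤ u` and `0 ≤ v`, so this is the
abstract `L^q` condition. -/
def IsAbstractLp (q : ℝ) (E : Type*) [NormedAddCommGroup E] [Lattice E] : Prop :=
  ∀ u v : E, u ⊓ v = 0 → ‖u + v‖ ^ q = ‖u‖ ^ q + ‖v‖ ^ q

theorem Lp.norm_rpow_eq_toReal_lintegral {α E : Type*} [MeasurableSpace α] {μ : Measure α}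
    [NormedAddCommGroup E] {p : ℝ≥0∞} [Fact (1 ≤ p)] (hp : p ≠ ∞) (h : Lp E p μ) :
    ‖h‖ ^ p.toReal = (∫⁻ x, ‖h x‖ₑ ^ p.toReal ∂μ).toReal := by
  have hp0 : p ≠ 0 := (zero_lt_one.trans_le Fact.out).ne'
  rw [Lp.norm_def, ENNReal.toReal_rpow, eLpNorm_eq_eLpNorm' hp0 hp,
    lintegral_rpow_enorm_eq_rpow_eLpNorm' (ENNReal.toReal_pos hp0 hp)]

theorem Lp.isAbstractLp {α : Type*} [MeasurableSpace α] {μ : Measure α} {p : ℝ≥0∞}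
    [Fact (1 ≤ p)] (hp : p ≠ ∞) : IsAbstractLp p.toReal (Lp ℝ p μ) := by
  intro u v huv
  have hp0 : p ≠ 0 := (zero_lt_one.trans_le Fact.out).ne'
  have hq : 0 < p.toReal := ENNReal.toReal_pos hp0 hp
  have hpoint : ∀ᵐ x ∂μ, ‖(u + v) x‖ₑ ^ p.toReal = ‖u x‖ₑ ^ p.toReal + ‖v x‖ₑ ^ p.toReal := by
    have h0 : ⇑(u ⊓ v) =ᵐ[μ] 0 := huv ▸ Lp.coeFn_zero ℝ p μ
    filter_upwards [Lp.coeFn_add u v, Lp.coeFn_inf u v, h0] with x hadd hinf hzero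
    have hmin : min (u x) (v x) = 0 := hinf.symm.trans hzero
    rw [hadd, Pi.add_apply]
    rcases min_choice (u x) (v x) with h | h <;> rw [h] at hmin <;>
      simp [hmin, ENNReal.zero_rpow_of_pos hq]
  have hfin (h : Lp ℝ p μ) : ∫⁻ x, ‖h x‖ₑ ^ p.toReal ∂μ ≠ ∞ :=
    (lintegral_rpow_enorm_lt_top_of_eLpNorm_lt_top hp0 hp (Lp.eLpNorm_lt_top h)).ne
  rw [Lp.norm_rpow_eq_toReal_lintegral hp, Lp.norm_rpow_eq_toReal_lintegral hp,
    Lp.norm_rpow_eq_toReal_lintegral hp, lintegral_congr_ae hpoint,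
    lintegral_add_left' ((Lp.aestronglyMeasurable u).enorm.pow_const _),
    ENNReal.toReal_add (hfin u) (hfin v)]

section UltraproductNorm

variable {A : Type*}

theorem BddFun.add {f g : A → ℝ} (hf : BddFun f) (hg : BddFun g) : BddFun (f + g) := by
  obtain ⟨C, hC⟩ := hf
  obtain ⟨D, hD⟩ := hg
  exact ⟨C + D, fun a => (abs_add_le _ _).trans (add_le_add (hC a) (hD a))⟩

theorem BddFun.sub {f g : A → ℝ} (hf : BddFun f) (hg : BddFun g) : BddFun (f - g) := by
  obtain ⟨C, hC⟩ := hf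
  obtain ⟨D, hD⟩ := hg
  exact ⟨C + D, fun a => (abs_sub _ _).trans (add_le_add (hC a) (hD a))⟩

theorem BddFun.comp_continuous {f : A → ℝ} (hf : BddFun f) {u : ℝ → ℝ} (hu : Continuous u) :
    BddFun fun a => u (f a) := by
  obtain ⟨C, hC⟩ := hf
  obtain ⟨D, hD⟩ := (isCompact_Icc (a := -C) (b := C)).exists_bound_of_continuousOn
    hu.continuousOn
  exact ⟨D, fun a => hD (f a) (abs_le.1 (hC a))⟩

/-- The two properties of the generalized Banach limit `LIM` that the argument uses. -/
structure IsLimitFunctional (L : (A → ℝ) → ℝ) : Prop where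
  map_add : ∀ f g : A → ℝ, BddFun f → BddFun g → L (f + g) = L f + L g
  map_comp : ∀ f : A → ℝ, BddFun f → ∀ u : ℝ → ℝ, Continuous u →
    L (fun a => u (f a)) = u (L f)

namespace IsLimitFunctional

variable {L : (A → ℝ) → ℝ}

theorem nonneg (hL : IsLimitFunctional L) {h : A → ℝ} (hb : BddFun h) (h0 : ∀ a, 0 ≤ h a) :
    0 ≤ L h := by
  have habs : L (fun a => |h a|) = |L h| := hL.map_comp h hb abs continuous_abs
  simp only [abs_of_nonneg (h0 _)] at habs
  exact habs ▸ abs_nonneg _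

theorem mono (hL : IsLimitFunctional L) {h₁ h₂ : A → ℝ} (hb₁ : BddFun h₁) (hb₂ : BddFun h₂)
    (hle : ∀ a, h₁ a ≤ h₂ a) :
    L h₁ ≤ L h₂ := by
  have hsplit := hL.map_add h₁ (h₂ - h₁) hb₁ (hb₂.sub hb₁)
  rw [add_sub_cancel] at hsplit
  linarith [hL.nonneg (hb₂.sub hb₁) fun a => sub_nonneg.2 (hle a)]

end IsLimitFunctional

section LimNorm

variable {E : A → Type*}

/-- The norm `‖x‖_LIM` of the class of the family `x` in the ultraproduct. -/
def limNorm [∀ a, Norm (E a)] (L : (A → ℝ) → ℝ) (x : ∀ a, E a) : ℝ := L fun a => ‖x a‖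

def BoundedFamily [∀ a, Norm (E a)] (x : ∀ a, E a) : Prop := ∃ C, ∀ a, ‖x a‖ ≤ C

variable [∀ a, SeminormedAddCommGroup (E a)] {x y : ∀ a, E a}

theorem BoundedFamily.bddFun_norm (hx : BoundedFamily x) : BddFun fun a => ‖x a‖ := by
  obtain ⟨C, hC⟩ := hx
  exact ⟨C, fun a => (abs_norm (x a)).trans_le (hC a)⟩

theorem BoundedFamily.add (hx : BoundedFamily x) (hy : BoundedFamily y) :
    BoundedFamily (x + y) := by
  obtain ⟨C, hC⟩ := hx
  obtain ⟨D, hD⟩ := hy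
  exact ⟨C + D, fun a => (norm_add_le _ _).trans (add_le_add (hC a) (hD a))⟩

theorem BoundedFamily.sub (hx : BoundedFamily x) (hy : BoundedFamily y) :
    BoundedFamily (x - y) := by
  obtain ⟨C, hC⟩ := hx
  obtain ⟨D, hD⟩ := hy
  exact ⟨C + D, fun a => (norm_sub_le _ _).trans (add_le_add (hC a) (hD a))⟩

variable {L : (A → ℝ) → ℝ}

theorem IsLimitFunctional.limNorm_nonneg (hL : IsLimitFunctional L) (hx : BoundedFamily x) :
    0 ≤ limNorm L x :=
  hL.nonneg hx.bddFun_norm fun a => norm_nonneg (x a)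

theorem IsLimitFunctional.limNorm_add_le (hL : IsLimitFunctional L) (hx : BoundedFamily x)
    (hy : BoundedFamily y) :
    limNorm L (x + y) ≤ limNorm L x + limNorm L y := by
  rw [limNorm, limNorm, limNorm, ← hL.map_add _ _ hx.bddFun_norm hy.bddFun_norm]
  exact hL.mono (hx.add hy).bddFun_norm (hx.bddFun_norm.add hy.bddFun_norm)
    fun a => norm_add_le (x a) (y a)

theorem IsLimitFunctional.limNorm_add_eq_zero (hL : IsLimitFunctional L) (hx : BoundedFamily x)
    (hy : BoundedFamily y) (hx0 : limNorm L x = 0) (hy0 : limNorm L y = 0) :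
    limNorm L (x + y) = 0 :=
  le_antisymm ((limNorm_add_le hL hx hy).trans_eq (by rw [hx0, hy0, add_zero]))
    (limNorm_nonneg hL (hx.add hy))

theorem IsLimitFunctional.limNorm_eq_of_limNorm_sub_eq_zero (hL : IsLimitFunctional L)
    (hx : BoundedFamily x) (hy : BoundedFamily y) (hxy : limNorm L (x - y) = 0) :
    limNorm L x = limNorm L y := by
  have hyx : limNorm L (y - x) = 0 := by
    rw [← hxy, limNorm, limNorm]
    simp only [Pi.sub_apply, norm_sub_rev]
  apply le_antisymm
  · simpa [hxy] using limNorm_add_le hL (hx.sub hy) hy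
  · simpa [hyx] using limNorm_add_le hL (hy.sub hx) hx

theorem IsLimitFunctional.limNorm_rpow (hL : IsLimitFunctional L) (hx : BoundedFamily x) {q : ℝ}
    (hq : 0 ≤ q) :
    L (fun a => ‖x a‖ ^ q) = limNorm L x ^ q :=
  hL.map_comp _ hx.bddFun_norm _ (Real.continuous_rpow_const hq)

end LimNorm

theorem BoundedFamily.inf {E : A → Type*} [∀ a, NormedAddCommGroup (E a)] [∀ a, Lattice (E a)]
    [∀ a, HasSolidNorm (E a)] [∀ a, IsOrderedAddMonoid (E a)] {x y : ∀ a, E a}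
    (hx : BoundedFamily x) (hy : BoundedFamily y) : BoundedFamily (x ⊓ y) := by
  obtain ⟨C, hC⟩ := hx
  obtain ⟨D, hD⟩ := hy
  exact ⟨C + D, fun a => (norm_inf_le_add _ _).trans (add_le_add (hC a) (hD a))⟩

theorem IsLimitFunctional.limNorm_add_rpow_of_limNorm_inf_eq_zero {E : A → Type*}
    [∀ a, NormedAddCommGroup (E a)] [∀ a, Lattice (E a)] [∀ a, HasSolidNorm (E a)]
    [∀ a, IsOrderedAddMonoid (E a)] {L : (A → ℝ) → ℝ} (hL : IsLimitFunctional L) {q : ℝ}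
    (hq : 0 ≤ q) (hE : ∀ a, IsAbstractLp q (E a)) {f g : ∀ a, E a} (hf : BoundedFamily f)
    (hg : BoundedFamily g) (hfg : limNorm L (f ⊓ g) = 0) :
    limNorm L (f + g) ^ q = limNorm L f ^ q + limNorm L g ^ q := by
  have hm : BoundedFamily (f ⊓ g) := hf.inf hg
  set f' := f - f ⊓ g
  set g' := g - f ⊓ g
  have hf' : BoundedFamily f' := hf.sub hm
  have hg' : BoundedFamily g' := hg.sub hm
  have hdisj : f' ⊓ g' = 0 := by rw [← inf_sub, sub_self]
  have hff' : limNorm L f = limNorm L f' :=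
    limNorm_eq_of_limNorm_sub_eq_zero hL hf hf' (by rwa [sub_sub_cancel])
  have hgg' : limNorm L g = limNorm L g' :=
    limNorm_eq_of_limNorm_sub_eq_zero hL hg hg' (by rwa [sub_sub_cancel])
  have hsum : limNorm L (f + g) = limNorm L (f' + g') :=
    limNorm_eq_of_limNorm_sub_eq_zero hL (hf.add hg) (hf'.add hg') <| by
      rw [show f + g - (f' + g') = f ⊓ g + f ⊓ g by simp only [f', g']; abel]
      exact limNorm_add_eq_zero hL hm hm hfg hfg
  have hpow : (fun a => ‖f' a + g' a‖ ^ q) = (fun a => ‖f' a‖ ^ q) + fun a => ‖g' a‖ ^ q :=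
    funext fun a => hE a _ _ (congrFun hdisj a)
  calc limNorm L (f + g) ^ q = L fun a => ‖f' a + g' a‖ ^ q := by
        rw [hsum, ← limNorm_rpow hL (hf'.add hg') hq]; rfl
    _ = L (fun a => ‖f' a‖ ^ q) + L (fun a => ‖g' a‖ ^ q) := by
        have hcont : Continuous fun t : ℝ => t ^ q := Real.continuous_rpow_const hq
        rw [hpow, hL.map_add _ _ (hf'.bddFun_norm.comp_continuous hcont)
          (hg'.bddFun_norm.comp_continuous hcont)]
    _ = limNorm L f ^ q + limNorm L g ^ q := by
        rw [limNorm_rpow hL hf' hq, limNorm_rpow hL hg' hq, hff', hgg']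

end UltraproductNorm

theorem ultraproduct_Lp_is_abstract_Lp_general
    {A : Type*}
    {Ω : A → Type*} [∀ a, MeasurableSpace (Ω a)] (μ : ∀ a, Measure (Ω a))
    (p : ℝ≥0∞) [Fact (1 ≤ p)] (hp : p ≠ ∞)
    (L : (A → ℝ) → ℝ)
    (hLadd : ∀ f g : A → ℝ, BddFun f → BddFun g → L (f + g) = L f + L g)
    (hLcomp : ∀ f : A → ℝ, BddFun f → ∀ u : ℝ → ℝ, Continuous u →
      L (fun a => u (f a)) = u (L f))
    (f g : ∀ a, Lp ℝ p (μ a))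
    (hfbd : ∃ C, ∀ a, ‖f a‖ ≤ C) (hgbd : ∃ C, ∀ a, ‖g a‖ ≤ C)
    (hdisj : L (fun a => ‖f a ⊓ g a‖) = 0) :
    (L (fun a => ‖f a + g a‖)) ^ p.toReal
      = (L (fun a => ‖f a‖)) ^ p.toReal + (L (fun a => ‖g a‖)) ^ p.toReal :=
  IsLimitFunctional.limNorm_add_rpow_of_limNorm_inf_eq_zero ⟨hLadd, hLcomp⟩
    ENNReal.toReal_nonneg (fun _ => Lp.isAbstractLp hp) hfbd hgbd hdisj

/-- The ultraproduct (with respect to a generalized Banach limit `L`) of a net of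
`L^p`-spaces, `1 ≤ p < ∞`, is an abstract `L^p`-space: if `f, g ≥ 0` with `f ∧ g = 0`
in the ultraproduct (i.e. `‖f ∧ g‖_LIM = 0`), then `‖f+g‖^p = ‖f‖^p + ‖g‖^p`,
where `‖h‖_LIM = L (a ↦ ‖h a‖)`. -/
theorem ultraproduct_Lp_is_abstract_Lp
    {A : Type*} [Preorder A] [IsDirected A (· ≤ ·)] [Nonempty A]
    {Ω : A → Type*} [∀ a, MeasurableSpace (Ω a)] (μ : ∀ a, Measure (Ω a))
    (p : ℝ≥0∞) [Fact (1 ≤ p)] (hp : p ≠ ∞)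
    (L : (A → ℝ) → ℝ)
    (hLadd : ∀ f g : A → ℝ, BddFun f → BddFun g → L (f + g) = L f + L g)
    (hLsmul : ∀ (c : ℝ) (f : A → ℝ), BddFun f → L (fun a => c * f a) = c * L f)
    (hLsq : ∀ f : A → ℝ, BddFun f →
      liminf f atTop ≤ L f ∧ L f ≤ limsup f atTop)
    (hLcomp : ∀ f : A → ℝ, BddFun f → ∀ u : ℝ → ℝ, Continuous u →
      L (fun a => u (f a)) = u (L f))
    (f g : ∀ a, Lp ℝ p (μ a))
    (hfbd : ∃ C, ∀ a, ‖f a‖ ≤ C) (hgbd : ∃ C, ∀ a, ‖g a‖ ≤ C)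
    (hf0 : ∀ a, 0 ≤ f a) (hg0 : ∀ a, 0 ≤ g a)
    (hdisj : L (fun a => ‖f a ⊓ g a‖) = 0) :
    (L (fun a => ‖f a + g a‖)) ^ p.toReal
      = (L (fun a => ‖f a‖)) ^ p.toReal + (L (fun a => ‖g a‖)) ^ p.toReal :=
  ultraproduct_Lp_is_abstract_Lp_general μ p hp L hLadd hLcomp f g hfbd hgbd hdisj
end

section
/- Let T ∈ B(l^p_n) be represented by its matrix (T_{ij}) with respect to the standard basis. Then T is a sub-positive contraction if and only if the matrix (|T_{ij}|) represents a contraction on l^p_n. -/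
open scoped ENNReal ComplexOrder

/-- A matrix acting on `l^p_n(ℂ)` is a positive operator: it maps vectors with
nonnegative real entries to vectors with nonnegative real entries. -/
def PosMatOp {n : ℕ} (A : Matrix (Fin n) (Fin n) ℂ) : Prop :=
  ∀ x : Fin n → ℂ, (∀ i, 0 ≤ (x i).re ∧ (x i).im = 0) →
    ∀ i, 0 ≤ (A.mulVec x i).re ∧ (A.mulVec x i).im = 0

/-- A matrix represents a contraction on `l^p_n(ℂ)`. -/
def IsLpContraction (p : ℝ≥0∞) [Fact (1 ≤ p)] {n : ℕ}
    (A : Matrix (Fin n) (Fin n) ℂ) : Prop :=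
  ∀ x : Fin n → ℂ,
    ‖(WithLp.equiv p (Fin n → ℂ)).symm (A.mulVec x)‖
      ≤ ‖(WithLp.equiv p (Fin n → ℂ)).symm x‖

/-!
Choosing `θ` with `e^{iθ} T i j = -‖T i j‖` shows that `R + Re(e^{iθ}T) ≥ 0` for all `θ` says
exactly that `R` dominates `(‖T i j‖)` entrywise. Hence `(‖T i j‖)` is itself the least admissible
`R`, and conversely it inherits contractivity from any admissible `R`, since
`|(|T| x) i| ≤ (R |x|) i` and the `l^p` norm is monotone in the moduli of the coordinates.
-/

theorem PiLp.norm_le_norm_of_forall_norm_le {p : ℝ≥0∞} [Fact (1 ≤ p)] {ι : Type*} [Fintype ι]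
    {β : ι → Type*} [∀ i, SeminormedAddCommGroup (β i)] {x y : PiLp p β}
    (h : ∀ i, ‖x i‖ ≤ ‖y i‖) : ‖x‖ ≤ ‖y‖ := by
  rcases p.trichotomy with rfl | rfl | hp
  · exact absurd (Fact.out : (1 : ℝ≥0∞) ≤ 0) (by simp)
  · rw [norm_eq_ciSup, norm_eq_ciSup]
    exact ciSup_mono (Set.finite_range _).bddAbove h
  · rw [norm_eq_sum hp, norm_eq_sum hp]
    gcongr with i
    exact h i

theorem Complex.forall_nonneg_add_re_exp_mul_iff (z w : ℂ) :
    (∀ θ : ℝ, 0 ≤ w + ((exp (θ * I) * z).re : ℂ)) ↔ (‖z‖ : ℂ) ≤ w := by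
  constructor
  · intro h
    -- rotating `z` onto the negative real axis
    have hrot : exp (((Real.pi - z.arg : ℝ) : ℂ) * I) * z = -(‖z‖ : ℂ) := by
      nth_rewrite 2 [← norm_mul_exp_arg_mul_I z]
      rw [mul_left_comm, ← exp_add, ofReal_sub, sub_mul, sub_add_cancel, exp_pi_mul_I]
      ring
    have := h (Real.pi - z.arg)
    rwa [hrot, neg_re, ofReal_neg, ofReal_re, ← sub_eq_add_neg, sub_nonneg] at this
  · intro h θ
    have hre : -‖z‖ ≤ (exp (θ * I) * z).re := by
      simpa [norm_exp_ofReal_mul_I] using neg_le_of_abs_le (abs_re_le_norm (exp (θ * I) * z))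
    calc (0 : ℂ) ≤ ‖z‖ + ((exp (θ * I) * z).re : ℂ) := by
          rw [← ofReal_add, zero_le_real]; linarith
      _ ≤ w + ((exp (θ * I) * z).re : ℂ) := add_le_add_left h _

theorem posMatOp_iff {n : ℕ} {A : Matrix (Fin n) (Fin n) ℂ} : PosMatOp A ↔ ∀ i j, 0 ≤ A i j := by
  have hnonneg (z : ℂ) : (0 ≤ z.re ∧ z.im = 0) ↔ 0 ≤ z := by rw [Complex.nonneg_iff, eq_comm]
  simp only [PosMatOp, hnonneg]
  refine ⟨fun h i j => ?_, fun h x hx i => Finset.sum_nonneg fun j _ => mul_nonneg (h i j) (hx j)⟩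
  simpa [Matrix.mulVec_single_one] using h (Pi.single j 1) (Pi.single_nonneg.2 zero_le_one) i

theorem forall_posMatOp_add_re_iff {n : ℕ} (R T : Matrix (Fin n) (Fin n) ℂ) :
    (∀ θ : ℝ, PosMatOp (R + Matrix.of fun i j =>
        (((Complex.exp (θ * Complex.I) * T i j).re : ℝ) : ℂ)))
      ↔ ∀ i j, (‖T i j‖ : ℂ) ≤ R i j := by
  simp only [posMatOp_iff, Matrix.add_apply, Matrix.of_apply,
    ← Complex.forall_nonneg_add_re_exp_mul_iff]
  exact ⟨fun h i j θ => h θ i j, fun h θ i j => h i j θ⟩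

theorem IsLpContraction.of_norm_le {p : ℝ≥0∞} [Fact (1 ≤ p)] {n : ℕ}
    {A B : Matrix (Fin n) (Fin n) ℂ} (hB : IsLpContraction p B)
    (hAB : ∀ i j, (‖A i j‖ : ℂ) ≤ B i j) : IsLpContraction p A := by
  intro x
  set y : Fin n → ℂ := fun j => (‖x j‖ : ℂ)
  have hy (j : Fin n) : ‖y j‖ = ‖x j‖ := by simp [y]
  have hrow (i : Fin n) : ‖A.mulVec x i‖ ≤ ‖B.mulVec y i‖ := by
    have hsum : (((∑ j, ‖A i j‖ * ‖x j‖ : ℝ)) : ℂ) ≤ B.mulVec y i := by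
      push_cast
      exact Finset.sum_le_sum fun j _ => mul_le_mul_of_nonneg_right (hAB i j) (by simp)
    calc ‖A.mulVec x i‖ ≤ ∑ j, ‖A i j‖ * ‖x j‖ :=
          norm_sum_le_of_le (f := fun j => A i j * x j) _ fun j _ => (norm_mul _ _).le
      _ = ‖(((∑ j, ‖A i j‖ * ‖x j‖ : ℝ)) : ℂ)‖ := by
          rw [Complex.norm_of_nonneg (by positivity)]
      _ ≤ ‖B.mulVec y i‖ := CStarAlgebra.norm_le_norm_of_nonneg_of_le (by positivity) hsum
  calc _ ≤ ‖(WithLp.equiv p (Fin n → ℂ)).symm (B.mulVec y)‖ :=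
        PiLp.norm_le_norm_of_forall_norm_le hrow
    _ ≤ ‖(WithLp.equiv p (Fin n → ℂ)).symm y‖ := hB y
    _ = _ := le_antisymm (PiLp.norm_le_norm_of_forall_norm_le fun j => (hy j).le)
        (PiLp.norm_le_norm_of_forall_norm_le fun j => (hy j).ge)

theorem subpositive_contraction_iff_abs_contraction_general
    (p : ℝ≥0∞) [Fact (1 ≤ p)] {n : ℕ}
    (T : Matrix (Fin n) (Fin n) ℂ) :
    (∃ R : Matrix (Fin n) (Fin n) ℂ, PosMatOp R ∧ IsLpContraction p R ∧
        ∀ θ : ℝ, PosMatOp (R + Matrix.of fun i j =>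
          (((Complex.exp (θ * Complex.I) * T i j).re : ℝ) : ℂ)))
      ↔ IsLpContraction p (Matrix.of fun i j => ((‖T i j‖ : ℝ) : ℂ)) := by
  constructor
  · rintro ⟨R, -, hR, hθ⟩
    exact hR.of_norm_le fun i j => by simpa using (forall_posMatOp_add_re_iff R T).1 hθ i j
  · intro h
    refine ⟨_, posMatOp_iff.2 fun i j => ?_, h, (forall_posMatOp_add_re_iff _ T).2 fun i j => le_rfl⟩
    exact Complex.zero_le_real.2 (norm_nonneg _)

/-- `T ∈ B(l^p_n)` is a sub-positive contraction (there is a positive contraction `R`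
with `R + Re(e^{iθ}T) ≥ 0` for all `θ`) if and only if the matrix `(|T_{ij}|)`
represents a contraction on `l^p_n`. -/
theorem subpositive_contraction_iff_abs_contraction
    (p : ℝ≥0∞) [Fact (1 ≤ p)] (hp : p ≠ ∞) {n : ℕ}
    (T : Matrix (Fin n) (Fin n) ℂ) :
    (∃ R : Matrix (Fin n) (Fin n) ℂ, PosMatOp R ∧ IsLpContraction p R ∧
        ∀ θ : ℝ, PosMatOp (R + Matrix.of fun i j =>
          (((Complex.exp (θ * Complex.I) * T i j).re : ℝ) : ℂ)))
      ↔ IsLpContraction p (Matrix.of fun i j => ((‖T i j‖ : ℝ) : ℂ)) :=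
  subpositive_contraction_iff_abs_contraction_general p T
end

section
/- For 1 ≤ p < ∞, p ≠ 2, every isometry S : L^p(Ω,μ) → L^p(Ω',μ') is separation preserving: f·g = 0 implies Sf·Sg = 0. -/
/-!
Write `D_P(a, b) = 2 (‖a‖^P + ‖b‖^P) - (‖a + b‖^P + ‖a - b‖^P)`. In a real inner product space,
with `q = P / 2`, the parallelogram law says that `‖a + b‖²` and `‖a - b‖²` average to
`‖a‖² + ‖b‖²`. Since `t ↦ t^q` is strictly concave for `q < 1` (strictly convex for `q > 1`)
and vanishes at `0`, it is strictly subadditive (superadditive) on positive reals, so for `P ≠ 2`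
the defect has the constant sign of `2 - P` and vanishes only when `a = 0` or `b = 0`.

For `f, g ∈ L^p` the defect of the norms is the integral of the pointwise defect. It is therefore
zero when `f` and `g` have disjoint supports; a linear isometry preserves it, so it is zero for
`Sf, Sg` as well, and an integral of constant sign vanishes only if the integrand vanishes a.e.
-/

open Set MeasureTheory
open scoped ENNReal

theorem StrictConvexOn.add_lt_map_add {f : ℝ → ℝ} (hf : StrictConvexOn ℝ (Ici 0) f)
    (h0 : f 0 = 0) {u v : ℝ} (hu : 0 < u) (hv : 0 < v) : f u + f v < f (u + v) := by
  have hs : 0 < u + v := add_pos hu hv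
  have below : ∀ w, 0 < w → w < u + v → f w < w / (u + v) * f (u + v) := by
    intro w hw0 hws
    -- `w` is a proper convex combination of `u + v` and `0`, where `f` vanishes
    have hcomb : (w / (u + v)) • (u + v) + (1 - w / (u + v)) • (0 : ℝ) = w := by
      simp [hs.ne']
    have := hf.2 (mem_Ici.2 hs.le) (mem_Ici.2 le_rfl) hs.ne' (div_pos hw0 hs)
      (sub_pos.2 ((div_lt_one hs).2 hws)) (add_sub_cancel _ _)
    rw [hcomb, h0] at this
    simpa using this
  calc f u + f v < u / (u + v) * f (u + v) + v / (u + v) * f (u + v) :=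
        add_lt_add (below u hu (by linarith)) (below v hv (by linarith))
    _ = f (u + v) := by field_simp

theorem StrictConcaveOn.map_add_lt_add {f : ℝ → ℝ} (hf : StrictConcaveOn ℝ (Ici 0) f)
    (h0 : f 0 = 0) {u v : ℝ} (hu : 0 < u) (hv : 0 < v) : f (u + v) < f u + f v := by
  have := hf.neg.add_lt_map_add (by simp [h0]) hu hv
  simp only [Pi.neg_apply] at this
  linarith

theorem ConcaveOn.add_le_two_mul_map_midpoint {f : ℝ → ℝ} {s : Set ℝ} (hf : ConcaveOn ℝ s f)
    {x y : ℝ} (hx : x ∈ s) (hy : y ∈ s) : f x + f y ≤ 2 * f ((x + y) / 2) := by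
  have := hf.2 hx hy (by norm_num : (0:ℝ) ≤ 1/2) (by norm_num : (0:ℝ) ≤ 1/2) (by norm_num)
  simp only [smul_eq_mul] at this
  rw [show (x + y) / 2 = 1/2 * x + 1/2 * y by ring]
  linarith

theorem ConvexOn.two_mul_map_midpoint_le {f : ℝ → ℝ} {s : Set ℝ} (hf : ConvexOn ℝ s f)
    {x y : ℝ} (hx : x ∈ s) (hy : y ∈ s) : 2 * f ((x + y) / 2) ≤ f x + f y := by
  have := hf.neg.add_le_two_mul_map_midpoint hx hy
  simp only [Pi.neg_apply] at this
  linarith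

namespace Real

variable {q x y u v : ℝ}

theorem rpow_add_rpow_lt_of_add_eq (hq₀ : 0 < q) (hq₁ : q < 1) (hx : 0 ≤ x) (hy : 0 ≤ y)
    (hu : 0 < u) (hv : 0 < v) (h : x + y = 2 * (u + v)) :
    x ^ q + y ^ q < 2 * (u ^ q + v ^ q) := by
  have hf := strictConcaveOn_rpow hq₀ hq₁
  calc x ^ q + y ^ q ≤ 2 * ((x + y) / 2) ^ q := hf.concaveOn.add_le_two_mul_map_midpoint hx hy
    _ = 2 * (u + v) ^ q := by rw [h, mul_div_cancel_left₀ _ two_ne_zero]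
    _ < 2 * (u ^ q + v ^ q) := by
        gcongr; exact hf.map_add_lt_add (zero_rpow hq₀.ne') hu hv

theorem two_mul_rpow_add_rpow_lt_of_add_eq (hq : 1 < q) (hx : 0 ≤ x) (hy : 0 ≤ y)
    (hu : 0 < u) (hv : 0 < v) (h : x + y = 2 * (u + v)) :
    2 * (u ^ q + v ^ q) < x ^ q + y ^ q := by
  have hf := strictConvexOn_rpow hq
  calc 2 * (u ^ q + v ^ q) < 2 * (u + v) ^ q := by
        gcongr; exact hf.add_lt_map_add (zero_rpow (by linarith)) hu hv
    _ = 2 * ((x + y) / 2) ^ q := by rw [h, mul_div_cancel_left₀ _ two_ne_zero]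
    _ ≤ x ^ q + y ^ q := hf.convexOn.two_mul_map_midpoint_le hx hy

end Real

section ParallelogramDefect

variable {E : Type*}

noncomputable def parallelogramDefect [SeminormedAddCommGroup E] (P : ℝ) (a b : E) : ℝ :=
  2 * (‖a‖ ^ P + ‖b‖ ^ P) - (‖a + b‖ ^ P + ‖a - b‖ ^ P)

variable [NormedAddCommGroup E] {P : ℝ} {a b : E}

theorem parallelogramDefect_eq_zero_of_eq_zero_or_eq_zero (hP : P ≠ 0) (h : a = 0 ∨ b = 0) :
    parallelogramDefect P a b = 0 := by
  rcases h with rfl | rfl <;> simp [parallelogramDefect, Real.zero_rpow hP] <;> ring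

theorem norm_rpow_eq_sq_rpow_half (a : E) (P : ℝ) : ‖a‖ ^ P = (‖a‖ ^ 2) ^ (P / 2) := by
  rw [← Real.rpow_natCast_mul (norm_nonneg a), Nat.cast_ofNat, mul_div_cancel₀ P two_ne_zero]

variable [InnerProductSpace ℝ E]

theorem norm_add_sq_add_norm_sub_sq (a b : E) :
    ‖a + b‖ ^ 2 + ‖a - b‖ ^ 2 = 2 * (‖a‖ ^ 2 + ‖b‖ ^ 2) := by
  have := parallelogram_law_with_norm ℝ a b
  nlinarith

theorem parallelogramDefect_pos (hP₀ : 0 < P) (hP₂ : P < 2) (ha : a ≠ 0) (hb : b ≠ 0) :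
    0 < parallelogramDefect P a b := by
  have := Real.rpow_add_rpow_lt_of_add_eq (q := P / 2) (by linarith) (by linarith)
    (by positivity) (by positivity) (by positivity) (by positivity)
    (norm_add_sq_add_norm_sub_sq a b)
  simp only [parallelogramDefect, norm_rpow_eq_sq_rpow_half _ P]
  linarith

theorem parallelogramDefect_neg (hP₂ : 2 < P) (ha : a ≠ 0) (hb : b ≠ 0) :
    parallelogramDefect P a b < 0 := by
  have := Real.two_mul_rpow_add_rpow_lt_of_add_eq (q := P / 2) (by linarith)
    (by positivity) (by positivity) (by positivity) (by positivity)
    (norm_add_sq_add_norm_sub_sq a b)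
  simp only [parallelogramDefect, norm_rpow_eq_sq_rpow_half _ P]
  linarith

theorem parallelogramDefect_nonneg (hP₀ : 0 < P) (hP₂ : P < 2) (a b : E) :
    0 ≤ parallelogramDefect P a b := by
  by_cases h : a = 0 ∨ b = 0
  · exact (parallelogramDefect_eq_zero_of_eq_zero_or_eq_zero hP₀.ne' h).ge
  · obtain ⟨ha, hb⟩ := not_or.1 h
    exact (parallelogramDefect_pos hP₀ hP₂ ha hb).le

theorem parallelogramDefect_nonpos (hP₂ : 2 < P) (a b : E) :
    parallelogramDefect P a b ≤ 0 := by
  by_cases h : a = 0 ∨ b = 0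
  · exact (parallelogramDefect_eq_zero_of_eq_zero_or_eq_zero (by linarith) h).le
  · obtain ⟨ha, hb⟩ := not_or.1 h
    exact (parallelogramDefect_neg hP₂ ha hb).le

theorem eq_zero_or_eq_zero_of_parallelogramDefect_eq_zero (hP₀ : 0 < P) (hP₂ : P ≠ 2)
    (h : parallelogramDefect P a b = 0) : a = 0 ∨ b = 0 := by
  by_contra! hab
  rcases hP₂.lt_or_gt with hlt | hgt
  · exact (parallelogramDefect_pos hP₀ hlt hab.1 hab.2).ne' h
  · exact (parallelogramDefect_neg hgt hab.1 hab.2).ne h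

end ParallelogramDefect

theorem ENNReal.ne_zero_of_fact_one_le {p : ℝ≥0∞} [Fact (1 ≤ p)] : p ≠ 0 :=
  (zero_lt_one.trans_le Fact.out).ne'

namespace MeasureTheory.Lp

variable {α E : Type*} [MeasurableSpace α] {μ : Measure α} [NormedAddCommGroup E] {p : ℝ≥0∞}

theorem parallelogramDefect_ae_eq (f g : Lp E p μ) :
    (fun x ↦ parallelogramDefect p.toReal (f x) (g x)) =ᵐ[μ] fun x ↦
      2 * (‖f x‖ ^ p.toReal + ‖g x‖ ^ p.toReal) -
        (‖(f + g) x‖ ^ p.toReal + ‖(f - g) x‖ ^ p.toReal) := by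
  filter_upwards [Lp.coeFn_add f g, Lp.coeFn_sub f g] with x hadd hsub
  rw [parallelogramDefect, hadd, hsub, Pi.add_apply, Pi.sub_apply]

theorem norm_rpow_eq_integral_norm_rpow (hp₀ : p ≠ 0) (hp : p ≠ ∞) (f : Lp E p μ) :
    ‖f‖ ^ p.toReal = ∫ x, ‖f x‖ ^ p.toReal ∂μ := by
  rw [norm_def, toReal_eLpNorm (Lp.aestronglyMeasurable f),
    lpNorm_eq_integral_norm_rpow_toReal hp₀ hp (Lp.aestronglyMeasurable f),
    Real.rpow_inv_rpow (integral_nonneg fun _ ↦ by positivity) (ENNReal.toReal_ne_zero.2 ⟨hp₀, hp⟩)]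

variable [Fact (1 ≤ p)]

theorem integrable_parallelogramDefect (hp : p ≠ ∞) (f g : Lp E p μ) :
    Integrable (fun x ↦ parallelogramDefect p.toReal (f x) (g x)) μ := by
  have hint := fun h : Lp E p μ ↦
    (Lp.memLp h).integrable_norm_rpow ENNReal.ne_zero_of_fact_one_le hp
  exact ((((hint f).fun_add (hint g)).const_mul 2).sub ((hint _).fun_add (hint _))).congr
    (parallelogramDefect_ae_eq f g).symm

theorem integral_parallelogramDefect (hp : p ≠ ∞) (f g : Lp E p μ) :
    ∫ x, parallelogramDefect p.toReal (f x) (g x) ∂μ = parallelogramDefect p.toReal f g := by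
  have hint := fun h : Lp E p μ ↦
    (Lp.memLp h).integrable_norm_rpow ENNReal.ne_zero_of_fact_one_le hp
  rw [integral_congr_ae (parallelogramDefect_ae_eq f g),
    integral_sub (((hint f).fun_add (hint g)).const_mul 2) ((hint _).fun_add (hint _)),
    integral_const_mul, integral_add (hint f) (hint g), integral_add (hint _) (hint _)]
  simp only [parallelogramDefect,
    norm_rpow_eq_integral_norm_rpow ENNReal.ne_zero_of_fact_one_le hp]

theorem parallelogramDefect_eq_zero_of_ae_eq_zero_or_eq_zero (hp : p ≠ ∞) {f g : Lp E p μ}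
    (hfg : ∀ᵐ x ∂μ, f x = 0 ∨ g x = 0) : parallelogramDefect p.toReal f g = 0 := by
  rw [← integral_parallelogramDefect hp]
  refine integral_eq_zero_of_ae ?_
  filter_upwards [hfg] with x hx using
    parallelogramDefect_eq_zero_of_eq_zero_or_eq_zero
      (ENNReal.toReal_pos ENNReal.ne_zero_of_fact_one_le hp).ne' hx

theorem ae_eq_zero_or_eq_zero_of_parallelogramDefect_eq_zero [InnerProductSpace ℝ E]
    (hp : p ≠ ∞) (hp₂ : p ≠ 2) {f g : Lp E p μ} (h : parallelogramDefect p.toReal f g = 0) :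
    ∀ᵐ x ∂μ, f x = 0 ∨ g x = 0 := by
  have hP₀ : 0 < p.toReal := ENNReal.toReal_pos ENNReal.ne_zero_of_fact_one_le hp
  have hP₂ : p.toReal ≠ 2 := fun hP ↦ hp₂ (by rw [← ENNReal.ofReal_toReal hp, hP]; norm_num)
  have hint := integrable_parallelogramDefect hp f g
  have hzero : (fun x ↦ parallelogramDefect p.toReal (f x) (g x)) =ᵐ[μ] 0 := by
    rcases hP₂.lt_or_gt with hlt | hgt
    · refine (integral_eq_zero_iff_of_nonneg (fun x ↦ ?_) hint).1 ?_
      · exact parallelogramDefect_nonneg hP₀ hlt _ _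
      · rw [integral_parallelogramDefect hp, h]
    · have hneg := (integral_eq_zero_iff_of_nonneg
        (fun x ↦ neg_nonneg.2 (parallelogramDefect_nonpos hgt _ _)) hint.neg).1
        (by rw [integral_neg, integral_parallelogramDefect hp, h, neg_zero])
      exact hneg.mono fun x hx ↦ neg_eq_zero.1 hx
  filter_upwards [hzero] with x hx using
    eq_zero_or_eq_zero_of_parallelogramDefect_eq_zero hP₀ hP₂ hx

end MeasureTheory.Lp

/-- For `1 ≤ p < ∞`, `p ≠ 2`, every linear isometry `S : L^p(Ω,μ) → L^p(Ω',μ')` is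
separation preserving: `f·g = 0` a.e. implies `Sf·Sg = 0` a.e. -/
theorem isometry_separation_preserving
    {Ω Ω' : Type*} [MeasurableSpace Ω] [MeasurableSpace Ω']
    (μ : Measure Ω) (μ' : Measure Ω')
    (p : ℝ≥0∞) [Fact (1 ≤ p)] (hp : p ≠ ∞) (hp2 : p ≠ 2)
    (S : Lp ℂ p μ →ₗ[ℂ] Lp ℂ p μ')
    (hS : ∀ f : Lp ℂ p μ, ‖S f‖ = ‖f‖)
    (f g : Lp ℂ p μ) (hfg : ∀ᵐ ω ∂μ, f ω * g ω = 0) :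
    ∀ᵐ ω' ∂μ', (S f) ω' * (S g) ω' = 0 := by
  have hdisjoint : ∀ᵐ ω ∂μ, f ω = 0 ∨ g ω = 0 := by
    filter_upwards [hfg] with ω h using mul_eq_zero.1 h
  have hdefect : parallelogramDefect p.toReal (S f) (S g) = parallelogramDefect p.toReal f g := by
    simp only [parallelogramDefect, ← map_add, ← map_sub, hS]
  have hSdefect : parallelogramDefect p.toReal (S f) (S g) = 0 :=
    hdefect.trans (Lp.parallelogramDefect_eq_zero_of_ae_eq_zero_or_eq_zero hp hdisjoint)
  filter_upwards [Lp.ae_eq_zero_or_eq_zero_of_parallelogramDefect_eq_zero hp hp2 hSdefect]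
    with ω' h using mul_eq_zero.2 h
end

section
/- Every separation preserving contraction R on L^p(Ω,μ) is a sub-positive contraction; moreover there exists a positive contraction P such that |Rf| = P|f| μ-almost everywhere for all f ∈ L^p(Ω,μ). -/
/-!
On the fibres of a simple function the images `R χ_v` have pairwise disjoint supports, so at
almost every point `R (∑ c_v χ_v) = c_k y` for a single fibre `k`. Hence `|Rf| = |R|f||`, and
`R|f|`, `R|g|` lie on a common ray a.e.: first for simple `f, g`, then for all `f, g` by density,
both being equations between continuous maps of `(f, g)`. Consequently `Pf = conj(sgn R|f|) · Rf`
is linear, the phases of `R|f|`, `R|g|`, `R|f + g|` agreeing wherever they matter, and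
`|Pf| = |Rf|`. For `f ≥ 0` it is `Pf = |Rf|`, which gives positivity, `P|f| = |Rf|` and
`Pf + Re(e^{iθ}Rf) ≥ 0`.
-/

open MeasureTheory Filter ComplexConjugate
open scoped ENNReal ComplexOrder

noncomputable section

-- The junk value `0` at `z = 0` makes `conjPhase z * z = ‖z‖` hold for every `z`.
def conjPhase (z : ℂ) : ℂ := conj z / ‖z‖

theorem measurable_conjPhase : Measurable conjPhase := by
  unfold conjPhase; fun_prop

theorem conjPhase_mul_self (z : ℂ) : conjPhase z * z = ‖z‖ := by
  rcases eq_or_ne z 0 with rfl | hz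
  · simp [conjPhase]
  · rw [conjPhase, div_mul_eq_mul_div, Complex.conj_mul', sq,
      mul_div_cancel_right₀ _ (by simpa using hz)]

theorem norm_conjPhase_mul_le (z w : ℂ) : ‖conjPhase z * w‖ ≤ ‖w‖ := by
  rcases eq_or_ne z 0 with rfl | hz
  · simp [conjPhase]
  · simp [conjPhase, hz]

theorem norm_conjPhase_mul_of_norm_eq {z w : ℂ} (h : ‖w‖ = ‖z‖) : ‖conjPhase z * w‖ = ‖w‖ := by
  rcases eq_or_ne z 0 with rfl | hz
  · simp_all [conjPhase]
  · simp [conjPhase, hz]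

theorem conjPhase_ofReal_mul {r : ℝ} (hr : 0 < r) (z : ℂ) : conjPhase (r * z) = conjPhase z := by
  simp [conjPhase, abs_of_pos hr, mul_div_mul_left, hr.ne']

theorem SameRay.conjPhase_eq {z w : ℂ} (h : SameRay ℝ z w) (hz : z ≠ 0) (hw : w ≠ 0) :
    conjPhase z = conjPhase w := by
  have h' := congrArg conj h.norm_smul_eq
  simp only [Complex.real_smul, map_mul, Complex.conj_ofReal] at h'
  rw [conjPhase, conjPhase, div_eq_div_iff (by simpa using hz) (by simpa using hw)]
  linear_combination h'.symm

theorem conjPhase_mul_eq_of_sameRay {A B a : ℂ} (h : SameRay ℝ A B) (ha : ‖a‖ = ‖A‖)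
    (hB : a = 0 ∨ B ≠ 0) : conjPhase A * a = conjPhase B * a := by
  rcases eq_or_ne a 0 with rfl | ha0
  · simp
  · have hA : A ≠ 0 := by rintro rfl; simp_all
    rw [h.conjPhase_eq hA (hB.resolve_left ha0)]

theorem conjPhase_mul_add {a b A B C : ℂ} (ha : ‖a‖ = ‖A‖) (hb : ‖b‖ = ‖B‖) (hab : ‖a + b‖ = ‖C‖)
    (hAB : SameRay ℝ A B) (hAC : SameRay ℝ A C) (hBC : SameRay ℝ B C) :
    conjPhase C * (a + b) = conjPhase A * a + conjPhase B * b := by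
  rcases eq_or_ne C 0 with rfl | hC
  · have hba : b = -a := eq_neg_of_add_eq_zero_right (by simpa using hab)
    have hB : a = 0 ∨ B ≠ 0 :=
      or_iff_not_imp_left.2 fun ha0 hB => ha0 (by simpa [hB, hba] using hb)
    rw [hba, add_neg_cancel, mul_zero, mul_neg, conjPhase_mul_eq_of_sameRay hAB ha hB,
      add_neg_cancel]
  · rw [mul_add, conjPhase_mul_eq_of_sameRay hAC ha (Or.inr hC),
      conjPhase_mul_eq_of_sameRay hBC hb (Or.inr hC)]

theorem exists_forall_sum_mul_eq_mul {ι M : Type*} [Nonempty ι] [Semiring M] [NoZeroDivisors M]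
    (s : Finset ι) {z : ι → M} (hz : (s : Set ι).Pairwise fun i j => z i * z j = 0) :
    ∃ k y, ∀ c : ι → M, ∑ i ∈ s, c i * z i = c k * y := by
  by_cases h : ∃ k ∈ s, z k ≠ 0
  · obtain ⟨k, hk, hzk⟩ := h
    refine ⟨k, z k, fun c => Finset.sum_eq_single_of_mem k hk fun i hi hik => ?_⟩
    rw [(mul_eq_zero.1 (hz hi hk hik)).resolve_right hzk, mul_zero]
  · push Not at h
    refine ⟨Classical.arbitrary ι, 0, fun c => ?_⟩
    rw [mul_zero]
    exact Finset.sum_eq_zero fun i hi => by rw [h i hi, mul_zero]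

theorem lipschitzWith_ofReal_norm : LipschitzWith 1 fun z : ℂ => (‖z‖ : ℂ) :=
  LipschitzWith.of_dist_le_mul fun z w => by
    simpa [Complex.dist_eq, ← Complex.ofReal_sub] using abs_norm_sub_norm_le z w

section Lp

variable {Ω : Type*} [MeasurableSpace Ω] {μ : Measure Ω} {p : ℝ≥0∞}

def absLp (f : Lp ℂ p μ) : Lp ℂ p μ :=
  lipschitzWith_ofReal_norm.compLp (by simp) f

theorem coeFn_absLp (f : Lp ℂ p μ) : ⇑(absLp f) =ᵐ[μ] fun ω => (‖f ω‖ : ℂ) :=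
  LipschitzWith.coeFn_compLp ..

@[fun_prop]
theorem continuous_absLp [Fact (1 ≤ p)] : Continuous (absLp : Lp ℂ p μ → Lp ℂ p μ) :=
  lipschitzWith_ofReal_norm.continuous_compLp (by simp)

theorem absLp_eq_absLp_iff {f g : Lp ℂ p μ} :
    absLp f = absLp g ↔ ∀ᵐ ω ∂μ, ‖f ω‖ = ‖g ω‖ := by
  rw [Lp.ext_iff, (coeFn_absLp f).congr_left, (coeFn_absLp g).congr_right]
  simp only [EventuallyEq, Complex.ofReal_inj]

theorem absLp_add_eq_iff {f g : Lp ℂ p μ} :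
    absLp (f + g) = absLp f + absLp g ↔ ∀ᵐ ω ∂μ, SameRay ℝ (f ω) (g ω) := by
  have hsum : ⇑(absLp (f + g)) =ᵐ[μ] fun ω => (‖f ω + g ω‖ : ℂ) := by
    filter_upwards [coeFn_absLp (f + g), Lp.coeFn_add f g] with ω h1 h2
    rw [h1, h2, Pi.add_apply]
  have hadd : ⇑(absLp f + absLp g) =ᵐ[μ] fun ω => ((‖f ω‖ + ‖g ω‖ : ℝ) : ℂ) := by
    filter_upwards [Lp.coeFn_add (absLp f) (absLp g), coeFn_absLp f, coeFn_absLp g]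
      with ω h1 h2 h3
    rw [h1, Pi.add_apply, h2, h3, Complex.ofReal_add]
  rw [Lp.ext_iff, hsum.congr_left, hadd.congr_right]
  simp only [EventuallyEq, Complex.ofReal_inj, sameRay_iff_norm_add]

theorem absLp_smul (c : ℂ) (f : Lp ℂ p μ) : absLp (c • f) = (‖c‖ : ℂ) • absLp f := by
  refine Lp.ext ?_
  filter_upwards [coeFn_absLp (c • f), Lp.coeFn_smul c f, Lp.coeFn_smul (‖c‖ : ℂ) (absLp f),
    coeFn_absLp f] with ω h1 h2 h3 h4
  rw [h1, h3, h2, Pi.smul_apply, Pi.smul_apply, h4]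
  simp

theorem absLp_eq_self {f : Lp ℂ p μ} (hf : ∀ᵐ ω ∂μ, 0 ≤ f ω) : absLp f = f := by
  refine Lp.ext ?_
  filter_upwards [coeFn_absLp f, hf] with ω h1 h2
  rw [h1, Complex.norm_of_nonneg' h2]

theorem absLp_absLp (f : Lp ℂ p μ) : absLp (absLp f) = absLp f :=
  absLp_eq_self ((coeFn_absLp f).mono fun _ h => h ▸ Complex.zero_le_real.2 (norm_nonneg _))

section SimpleFunc

variable {β : Type*} [Zero β] [DecidableEq β] {w : SimpleFunc Ω β}

-- The fibre of `0` may have infinite measure; it gets the junk value `0`.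
def fiberIndicatorLp (p : ℝ≥0∞) (hw : w.FinMeasSupp μ) (v : β) : Lp ℂ p μ :=
  if hv : v = 0 then 0
  else indicatorConstLp p (w.measurableSet_fiber v) (hw.meas_preimage_singleton_ne_zero hv).ne 1

theorem coeFn_fiberIndicatorLp (hw : w.FinMeasSupp μ) (v : β) :
    ⇑(fiberIndicatorLp p hw v) =ᵐ[μ] fun ω => if w ω = v ∧ v ≠ 0 then 1 else 0 := by
  rcases eq_or_ne v 0 with rfl | hv
  · simp only [fiberIndicatorLp, dite_true, ne_eq, not_true_eq_false, and_false, if_false]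
    exact Lp.coeFn_zero ℂ p μ
  · filter_upwards [indicatorConstLp_coeFn (p := p) (hs := w.measurableSet_fiber v)
      (hμs := (hw.meas_preimage_singleton_ne_zero hv).ne) (c := (1 : ℂ))] with ω h
    simp [fiberIndicatorLp, hv, h, Set.indicator]

theorem eq_sum_smul_fiberIndicatorLp (hw : w.FinMeasSupp μ) {c : β → ℂ} (hc : c 0 = 0)
    {h : Lp ℂ p μ} (hh : h =ᵐ[μ] fun ω => c (w ω)) :
    h = ∑ v ∈ w.range, c v • fiberIndicatorLp p hw v := by
  refine Lp.ext ?_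
  filter_upwards [hh, Lp.coeFn_fun_finsetSum w.range fun v => c v • fiberIndicatorLp p hw v,
    (eventually_all_finset _).2 fun v _ => Lp.coeFn_smul (c v) (fiberIndicatorLp p hw v),
    (eventually_all_finset _).2 fun v _ => coeFn_fiberIndicatorLp (p := p) hw v]
    with ω h1 h2 h3 h4
  have hterm : ∀ v ∈ w.range,
      (c v • fiberIndicatorLp p hw v) ω = if w ω = v then c v else 0 := by
    intro v hv
    rw [h3 v hv, Pi.smul_apply, h4 v hv, smul_eq_mul]
    split_ifs <;> simp_all
  rw [h1, h2, Finset.sum_congr rfl hterm, Finset.sum_ite_eq, if_pos (w.mem_range_self ω)]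

theorem ae_fiberIndicatorLp_mul_eq_zero (hw : w.FinMeasSupp μ) {v v' : β} (hvv' : v ≠ v') :
    ∀ᵐ ω ∂μ, fiberIndicatorLp p hw v ω * fiberIndicatorLp p hw v' ω = 0 := by
  filter_upwards [coeFn_fiberIndicatorLp (p := p) hw v, coeFn_fiberIndicatorLp (p := p) hw v']
    with ω h h'
  rw [h, h']
  split_ifs <;> simp_all

variable [Fact (1 ≤ p)]

def IsSeparationPreserving (R : Lp ℂ p μ →L[ℂ] Lp ℂ p μ) : Prop :=
  ∀ f g : Lp ℂ p μ, (∀ᵐ ω ∂μ, f ω * g ω = 0) → ∀ᵐ ω ∂μ, R f ω * R g ω = 0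

theorem apply_ae_eq_sum_mul_apply_fiberIndicatorLp (R : Lp ℂ p μ →L[ℂ] Lp ℂ p μ)
    (hw : w.FinMeasSupp μ) {c : β → ℂ} (hc : c 0 = 0) {h : Lp ℂ p μ}
    (hh : h =ᵐ[μ] fun ω => c (w ω)) :
    R h =ᵐ[μ] fun ω => ∑ v ∈ w.range, c v * R (fiberIndicatorLp p hw v) ω := by
  rw [eq_sum_smul_fiberIndicatorLp hw hc hh, map_sum]
  simp only [map_smul]
  filter_upwards [Lp.coeFn_fun_finsetSum w.range fun v => c v • R (fiberIndicatorLp p hw v),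
    (eventually_all_finset _).2 fun v _ => Lp.coeFn_smul (c v) (R (fiberIndicatorLp p hw v))]
    with ω h1 h2
  rw [h1]
  exact Finset.sum_congr rfl fun v hv => h2 v hv

variable {R : Lp ℂ p μ →L[ℂ] Lp ℂ p μ}

theorem IsSeparationPreserving.ae_exists_forall_sum_mul_eq_mul (hR : IsSeparationPreserving R)
    (hw : w.FinMeasSupp μ) :
    ∀ᵐ ω ∂μ, ∃ k y, ∀ c : β → ℂ,
      ∑ v ∈ w.range, c v * R (fiberIndicatorLp p hw v) ω = c k * y := by
  have hdisj : ∀ᵐ ω ∂μ, (w.range : Set β).Pairwise fun v v' =>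
      R (fiberIndicatorLp p hw v) ω * R (fiberIndicatorLp p hw v') ω = 0 := by
    simp only [Set.Pairwise, Finset.mem_coe, eventually_all_finset, eventually_imp_distrib_left]
    exact fun v _ v' _ hvv' => hR _ _ (ae_fiberIndicatorLp_mul_eq_zero hw hvv')
  filter_upwards [hdisj] with ω hω using exists_forall_sum_mul_eq_mul _ hω

end SimpleFunc

variable [Fact (1 ≤ p)] {R : Lp ℂ p μ →L[ℂ] Lp ℂ p μ}

theorem IsSeparationPreserving.ae_norm_eq_and_sameRay_of_simpleFunc
    (hR : IsSeparationPreserving R) {w : SimpleFunc Ω (ℂ × ℂ)} (hw : w.FinMeasSupp μ)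
    {f F G : Lp ℂ p μ} (hf : f =ᵐ[μ] fun ω => (w ω).1)
    (hF : F =ᵐ[μ] fun ω => (‖(w ω).1‖ : ℂ)) (hG : G =ᵐ[μ] fun ω => (‖(w ω).2‖ : ℂ)) :
    ∀ᵐ ω ∂μ, ‖R f ω‖ = ‖R F ω‖ ∧ SameRay ℝ (R F ω) (R G ω) := by
  filter_upwards [hR.ae_exists_forall_sum_mul_eq_mul hw,
    apply_ae_eq_sum_mul_apply_fiberIndicatorLp R hw (c := Prod.fst) rfl hf,
    apply_ae_eq_sum_mul_apply_fiberIndicatorLp R hw (c := fun v => (‖v.1‖ : ℂ)) (by simp) hF,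
    apply_ae_eq_sum_mul_apply_fiberIndicatorLp R hw (c := fun v => (‖v.2‖ : ℂ)) (by simp) hG]
    with ω ⟨k, y, hky⟩ h1 h2 h3
  rw [h1, h2, h3, hky, hky, hky]
  refine ⟨by simp, ?_⟩
  simpa [Complex.real_smul] using
    ((SameRay.refl y).nonneg_smul_left (norm_nonneg k.1)).nonneg_smul_right (norm_nonneg k.2)

theorem IsSeparationPreserving.absLp_apply_eq_and_absLp_add_eq (hp : p ≠ ∞)
    (hR : IsSeparationPreserving R) (f g : Lp ℂ p μ) :
    absLp (R f) = absLp (R (absLp f)) ∧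
      absLp (R (absLp f) + R (absLp g)) = absLp (R (absLp f)) + absLp (R (absLp g)) := by
  refine (Lp.simpleFunc.denseRange hp).induction_on₂ ?_ (fun s t => ?_) f g
  · exact (isClosed_eq (by fun_prop) (by fun_prop)).inter (isClosed_eq (by fun_prop) (by fun_prop))
  · have hp0 : p ≠ 0 := (zero_lt_one.trans_le Fact.out).ne'
    have hfin (u : Lp.simpleFunc ℂ p μ) : (Lp.simpleFunc.toSimpleFunc u).FinMeasSupp μ :=
      (SimpleFunc.memLp_iff_finMeasSupp hp0 hp).1 (Lp.simpleFunc.memLp u)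
    have hs := (Lp.simpleFunc.toSimpleFunc_eq_toFun s).symm
    have ht := (Lp.simpleFunc.toSimpleFunc_eq_toFun t).symm
    have key := hR.ae_norm_eq_and_sameRay_of_simpleFunc ((hfin s).pair (hfin t))
      (F := absLp s) (G := absLp t) hs
      ((coeFn_absLp _).trans (hs.fun_comp fun z => (‖z‖ : ℂ)))
      ((coeFn_absLp _).trans (ht.fun_comp fun z => (‖z‖ : ℂ)))
    rw [absLp_eq_absLp_iff, absLp_add_eq_iff]
    exact ⟨key.mono fun _ h => h.1, key.mono fun _ h => h.2⟩

theorem IsSeparationPreserving.ae_norm_apply_eq (hp : p ≠ ∞) (hR : IsSeparationPreserving R)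
    (f : Lp ℂ p μ) : ∀ᵐ ω ∂μ, ‖R f ω‖ = ‖R (absLp f) ω‖ :=
  absLp_eq_absLp_iff.1 (hR.absLp_apply_eq_and_absLp_add_eq hp f f).1

theorem IsSeparationPreserving.ae_sameRay (hp : p ≠ ∞) (hR : IsSeparationPreserving R)
    (f g : Lp ℂ p μ) : ∀ᵐ ω ∂μ, SameRay ℝ (R (absLp f) ω) (R (absLp g) ω) :=
  absLp_add_eq_iff.1 (hR.absLp_apply_eq_and_absLp_add_eq hp f g).2

theorem memLp_conjPhase_mul (R : Lp ℂ p μ →L[ℂ] Lp ℂ p μ) (f : Lp ℂ p μ) :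
    MemLp (fun ω => conjPhase (R (absLp f) ω) * R f ω) p μ :=
  (Lp.memLp (R f)).of_le
    ((measurable_conjPhase.comp_aemeasurable (Lp.aestronglyMeasurable _).aemeasurable).mul
      (Lp.aestronglyMeasurable _).aemeasurable).aestronglyMeasurable
    (Eventually.of_forall fun _ => norm_conjPhase_mul_le _ _)

def linearModulusFun (R : Lp ℂ p μ →L[ℂ] Lp ℂ p μ) (f : Lp ℂ p μ) : Lp ℂ p μ :=
  (memLp_conjPhase_mul R f).toLp _

theorem coeFn_linearModulusFun (R : Lp ℂ p μ →L[ℂ] Lp ℂ p μ) (f : Lp ℂ p μ) :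
    ⇑(linearModulusFun R f) =ᵐ[μ] fun ω => conjPhase (R (absLp f) ω) * R f ω :=
  MemLp.coeFn_toLp _

theorem linearModulusFun_smul (R : Lp ℂ p μ →L[ℂ] Lp ℂ p μ) (c : ℂ) (f : Lp ℂ p μ) :
    linearModulusFun R (c • f) = c • linearModulusFun R f := by
  have hphase (A a : ℂ) : conjPhase (‖c‖ * A) * (c * a) = c * (conjPhase A * a) := by
    rcases eq_or_ne c 0 with rfl | hc
    · simp
    · rw [conjPhase_ofReal_mul (norm_pos_iff.2 hc)]; ring
  refine Lp.ext ?_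
  filter_upwards [coeFn_linearModulusFun R (c • f), Lp.coeFn_smul c (linearModulusFun R f),
    coeFn_linearModulusFun R f, Lp.coeFn_smul (‖c‖ : ℂ) (R (absLp f)), Lp.coeFn_smul c (R f)]
    with ω h1 h2 h3 h4 h5
  rw [h1, h2, Pi.smul_apply, h3, absLp_smul, map_smul, map_smul, h4, h5]
  exact hphase _ _

theorem IsSeparationPreserving.linearModulusFun_add (hp : p ≠ ∞) (hR : IsSeparationPreserving R)
    (f g : Lp ℂ p μ) :
    linearModulusFun R (f + g) = linearModulusFun R f + linearModulusFun R g := by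
  refine Lp.ext ?_
  filter_upwards [coeFn_linearModulusFun R (f + g), coeFn_linearModulusFun R f,
    coeFn_linearModulusFun R g, Lp.coeFn_add (linearModulusFun R f) (linearModulusFun R g),
    Lp.coeFn_add (R f) (R g), hR.ae_norm_apply_eq hp f, hR.ae_norm_apply_eq hp g,
    hR.ae_norm_apply_eq hp (f + g), hR.ae_sameRay hp f g, hR.ae_sameRay hp f (f + g),
    hR.ae_sameRay hp g (f + g)]
    with ω hPfg hPf hPg hPadd hRadd hf hg hfg hray hray_f hray_g
  rw [map_add, hRadd, Pi.add_apply] at hPfg hfg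
  rw [hPfg, hPadd, Pi.add_apply, hPf, hPg]
  exact conjPhase_mul_add hf hg hfg hray hray_f hray_g

theorem IsSeparationPreserving.norm_linearModulusFun (hp : p ≠ ∞) (hR : IsSeparationPreserving R)
    (f : Lp ℂ p μ) : ‖linearModulusFun R f‖ = ‖R f‖ := by
  have h : ∀ᵐ ω ∂μ, ‖linearModulusFun R f ω‖ = ‖R f ω‖ := by
    filter_upwards [coeFn_linearModulusFun R f, hR.ae_norm_apply_eq hp f] with ω h1 h2
    rw [h1, norm_conjPhase_mul_of_norm_eq h2]
  rw [Lp.norm_def, Lp.norm_def, eLpNorm_congr_norm_ae h]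

def IsSeparationPreserving.linearModulus (hp : p ≠ ∞) (hR : IsSeparationPreserving R) :
    Lp ℂ p μ →L[ℂ] Lp ℂ p μ :=
  LinearMap.mkContinuous
    { toFun := linearModulusFun R
      map_add' := hR.linearModulusFun_add hp
      map_smul' := linearModulusFun_smul R }
    ‖R‖ fun f => (hR.norm_linearModulusFun hp f).trans_le (R.le_opNorm f)

theorem IsSeparationPreserving.norm_linearModulus_le (hp : p ≠ ∞)
    (hR : IsSeparationPreserving R) : ‖hR.linearModulus hp‖ ≤ ‖R‖ :=
  LinearMap.mkContinuous_norm_le _ (norm_nonneg R) _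

theorem IsSeparationPreserving.linearModulus_ae_eq_of_absLp_eq (hp : p ≠ ∞)
    (hR : IsSeparationPreserving R) {f : Lp ℂ p μ} (hf : absLp f = f) :
    hR.linearModulus hp f =ᵐ[μ] fun ω => (‖R f ω‖ : ℂ) := by
  filter_upwards [coeFn_linearModulusFun R f] with ω h
  rwa [hf, conjPhase_mul_self] at h

end Lp

end

/-- Every separation preserving contraction `R` on `L^p(Ω,μ;ℂ)` is a sub-positive
contraction: there exists a positive contraction `P` with `P + Re(e^{iθ}R) ≥ 0` for
all `θ` (tested on nonnegative functions, where `Re(e^{iθ}R)f` has a.e. value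
`Re(e^{iθ}(Rf))`), and moreover `|Rf| = P|f|` μ-a.e. for all `f`. -/
theorem separation_preserving_is_subpositive
    {Ω : Type*} [MeasurableSpace Ω] (μ : Measure Ω)
    (p : ℝ≥0∞) [Fact (1 ≤ p)] (hp : p ≠ ∞)
    (R : Lp ℂ p μ →L[ℂ] Lp ℂ p μ) (hR : ‖R‖ ≤ 1)
    (hsep : ∀ f g : Lp ℂ p μ, (∀ᵐ ω ∂μ, f ω * g ω = 0) →
      ∀ᵐ ω ∂μ, (R f) ω * (R g) ω = 0) :
    ∃ P : Lp ℂ p μ →L[ℂ] Lp ℂ p μ, ‖P‖ ≤ 1 ∧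
      (∀ f : Lp ℂ p μ, (∀ᵐ ω ∂μ, 0 ≤ (f ω).re ∧ (f ω).im = 0) →
        ∀ᵐ ω ∂μ, 0 ≤ ((P f) ω).re ∧ ((P f) ω).im = 0) ∧
      (∀ (θ : ℝ) (f : Lp ℂ p μ), (∀ᵐ ω ∂μ, 0 ≤ (f ω).re ∧ (f ω).im = 0) →
        ∀ᵐ ω ∂μ, 0 ≤ ((P f) ω).re + (Complex.exp (θ * Complex.I) * (R f) ω).re) ∧
      (∀ f g : Lp ℂ p μ, (∀ᵐ ω ∂μ, g ω = (‖f ω‖ : ℂ)) →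
        ∀ᵐ ω ∂μ, (P g) ω = (‖(R f) ω‖ : ℂ)) := by
  have hsep : IsSeparationPreserving R := hsep
  have habs_of_nonneg {f : Lp ℂ p μ} (hf : ∀ᵐ ω ∂μ, 0 ≤ (f ω).re ∧ (f ω).im = 0) :
      absLp f = f :=
    absLp_eq_self (hf.mono fun _ h => Complex.nonneg_iff.2 ⟨h.1, h.2.symm⟩)
  refine ⟨hsep.linearModulus hp, (hsep.norm_linearModulus_le hp).trans hR,
    fun f hf => ?_, fun θ f hf => ?_, fun f g hg => ?_⟩
  · filter_upwards [hsep.linearModulus_ae_eq_of_absLp_eq hp (habs_of_nonneg hf)] with ω h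
    simp [h]
  · filter_upwards [hsep.linearModulus_ae_eq_of_absLp_eq hp (habs_of_nonneg hf)] with ω h
    have hre := (abs_le.1 (Complex.abs_re_le_norm (Complex.exp (θ * Complex.I) * R f ω))).1
    rw [norm_mul, Complex.norm_exp_ofReal_mul_I, one_mul] at hre
    rw [h, Complex.ofReal_re]
    linarith
  · have hg' : absLp f = g := Lp.ext ((coeFn_absLp f).trans (EventuallyEq.symm hg))
    filter_upwards [hsep.linearModulus_ae_eq_of_absLp_eq hp (hg' ▸ absLp_absLp f),
      hsep.ae_norm_apply_eq hp f] with ω h1 h2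
    rw [h1, ← hg', h2]
end

section
/- Let E be a reflexive Banach space, G a commutative topological group, π a uniformly bounded representation, and Γ = ⋂_{U∈𝒰(e)} (closure of π(U) in the weak operator topology). Then ξ ∈ E satisfies: (x ↦ π(x)ξ is continuous) if and only if Sξ = ξ for every S ∈ Γ. -/
/-!
`Γ` is the set of WOT cluster points of `π x` as `x → e`. If `ξ` is norm continuous, every
`S ∈ Γ` satisfies `S ξ = lim π x ξ = ξ`. Conversely, reflexivity and Banach–Alaoglu put the `π x`
in a WOT-compact set, so `π x ξ` converges weakly to the common value `S ξ = ξ` of the cluster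
points, and translation spreads this from `e` to all of `G`. Weak continuity is upgraded to norm
continuity by fragmentability: every bounded set `A` of a reflexive space has nonempty weakly open
pieces of arbitrarily small norm diameter. For countable `A` this is Baire's theorem in the weakly
compact closure of `A`, covered by countably many closed balls centred in the separable closed
span of `A`. A general `A` is reduced to a countable subset closed under the choices made for
countably many rational boxes.
-/

open NormedSpace Set Filter Topology Bornology

section Topology

theorem mapClusterPt_iff_forall_mem_closure_image {X α : Type*} [TopologicalSpace X] {x : X}
    {F : Filter α} {u : α → X} : MapClusterPt x F u ↔ ∀ s ∈ F, x ∈ closure (u '' s) :=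
  (F.basis_sets.map u).clusterPt_iff_forall_mem_closure

theorem MapClusterPt.eq_of_tendsto {X α : Type*} [TopologicalSpace X] [T2Space X] {x y : X}
    {F : Filter α} {u : α → X} (hx : MapClusterPt x F u) (hy : Tendsto u F (𝓝 y)) : x = y :=
  eq_of_nhds_neBot (ClusterPt.mono hx hy)

theorem continuous_of_continuousAt_one_of_map_mul {G X : Type*} [Group G] [TopologicalSpace G]
    [IsTopologicalGroup G] [TopologicalSpace X] {f : G → X} (h : G → X → X)
    (hh : ∀ y, Continuous (h y)) (hf : ∀ y x, f (y * x) = h y (f x)) (h1 : ContinuousAt f 1) :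
    Continuous f := by
  refine continuous_iff_continuousAt.2 fun y => ?_
  have hcomp : f = h y ∘ f ∘ (y⁻¹ * ·) := funext fun x => by simp [← hf]
  rw [hcomp]
  refine (hh y).continuousAt.comp (ContinuousAt.comp ?_ (continuous_const_mul _).continuousAt)
  simpa using h1

theorem IsCompact.exists_isOpen_inter_subset_of_countable_cover {X ι : Type*}
    [TopologicalSpace X] [T2Space X] [Countable ι] {K : Set X} (hK : IsCompact K)
    (hne : K.Nonempty) {C : ι → Set X} (hC : ∀ i, IsClosed (C i)) (hKC : K ⊆ ⋃ i, C i) :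
    ∃ i O, IsOpen O ∧ (O ∩ K).Nonempty ∧ O ∩ K ⊆ C i := by
  have : CompactSpace K := isCompact_iff_compactSpace.1 hK
  have : Nonempty K := hne.to_subtype
  have hcover : ⋃ i, ((↑) : K → X) ⁻¹' C i = univ :=
    eq_univ_of_forall fun x => by simpa using hKC x.2
  obtain ⟨i, z, hz⟩ := nonempty_interior_of_iUnion_of_closed
    (fun i => (hC i).preimage continuous_subtype_val) hcover
  obtain ⟨O, hO, hOeq⟩ := isOpen_induced_iff.1 (isOpen_interior (s := ((↑) : K → X) ⁻¹' C i))
  refine ⟨i, O, hO, ⟨z, ?_, z.2⟩, fun x hx => ?_⟩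
  · rw [← hOeq] at hz
    exact hz
  · have : (⟨x, hx.2⟩ : K) ∈ interior (((↑) : K → X) ⁻¹' C i) := hOeq ▸ hx.1
    exact interior_subset (s := ((↑) : K → X) ⁻¹' C i) this

theorem Set.exists_countable_closed_under {α : Type*} (F : Set α → Set α)
    (hF : ∀ t, t.Finite → (F t).Countable) :
    ∃ s : Set α, s.Countable ∧ ∀ t ⊆ s, t.Finite → F t ⊆ s := by
  let step : Set α → Set α := fun s => s ∪ ⋃ t ∈ {t | t.Finite ∧ t ⊆ s}, F t
  let S : ℕ → Set α := fun n => step^[n] ∅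
  have hS : ∀ n, S (n + 1) = step (S n) := fun n => Function.iterate_succ_apply' _ _ _
  have hmono : Monotone S := monotone_nat_of_le_succ fun n => hS n ▸ subset_union_left
  have hcount : ∀ n, (S n).Countable := by
    intro n
    induction n with
    | zero => exact countable_empty
    | succ n ih =>
      rw [hS]
      exact ih.union ((countable_ofPred_finite_subset ih).biUnion fun t ht => hF t ht.1)
  refine ⟨⋃ n, S n, countable_iUnion hcount, fun t hts ht => ?_⟩
  obtain ⟨n, hn⟩ := hmono.directed_le.exists_mem_subset_of_finset_subset_biUnion
    (s := ht.toFinset) (by simpa using hts)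
  have hstep : F t ⊆ S (n + 1) := by
    rw [hS]
    exact subset_union_of_subset_right (subset_biUnion_of_mem (u := F)
      (show t ∈ {t | t.Finite ∧ t ⊆ S n} from ⟨ht, by simpa using hn⟩)) _
  exact hstep.trans (subset_iUnion S (n + 1))

theorem exists_countable_closed_under_prod {α β : Type*} [Countable β] (g : Set (α × β) → α) :
    ∃ Φ : Set α, Φ.Countable ∧ ∀ T : Set (α × β), T.Finite → T ⊆ Φ ×ˢ univ → g T ∈ Φ := by
  obtain ⟨Φ, hΦc, hΦ⟩ := Set.exists_countable_closed_under
    (fun t => g '' {T | T.Finite ∧ T ⊆ t ×ˢ univ})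
    (fun t ht => (countable_ofPred_finite_subset (ht.countable.prod countable_univ)).image g)
  refine ⟨Φ, hΦc, fun T hT hTΦ => hΦ (Prod.fst '' T) ?_ (hT.image _) ⟨T, ⟨hT, fun x hx => ?_⟩, rfl⟩⟩
  · rintro - ⟨x, hx, rfl⟩
    exact (hTΦ hx).1
  · exact ⟨mem_image_of_mem _ hx, trivial⟩

end Topology

section WeakTopology

variable {E : Type*} [NormedAddCommGroup E] [NormedSpace ℝ E]

theorem continuous_dual_toWeakSpace_symm (f : StrongDual ℝ E) :
    Continuous fun w : WeakSpace ℝ E => f ((toWeakSpace ℝ E).symm w) :=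
  WeakBilin.eval_continuous _ f

theorem IsClosed.image_toWeakSpace {s : Set E} (hc : IsClosed s) (hs : Convex ℝ s) :
    IsClosed (toWeakSpace ℝ E '' s) := by
  rw [← hc.closure_eq, hs.toWeakSpace_closure ℝ]
  exact isClosed_closure

theorem Bornology.IsBounded.isCompact_closure_image_toWeakSpace
    (hrefl : Function.Surjective (inclusionInDoubleDual ℝ E)) {s : Set E} (hs : IsBounded s) :
    IsCompact (closure (toWeakSpace ℝ E '' s)) := by
  refine isCompact_closure_of_isBounded ℝ E _
    (by rwa [(toWeakSpace ℝ E).injective.preimage_image]) fun z _ => ?_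
  obtain ⟨x, hx⟩ := hrefl (WeakDual.toStrongDual z)
  exact ⟨toWeakSpace ℝ E x, congrArg StrongDual.toWeakDual hx⟩

theorem toWeakSpace_symm_mem_closure_span {s : Set E} {w : WeakSpace ℝ E}
    (hw : w ∈ closure (toWeakSpace ℝ E '' s)) :
    (toWeakSpace ℝ E).symm w ∈ closure (Submodule.span ℝ s : Set E) := by
  obtain ⟨x, hx, rfl⟩ := ((Submodule.span ℝ s).convex.toWeakSpace_closure ℝ).symm.subset
    (closure_mono (image_mono Submodule.subset_span) hw)
  simpa using hx

theorem exists_countable_cover_closure_image_toWeakSpace {D : Set E} (hD : D.Countable) {r : ℝ}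
    (hr : 0 < r) : ∃ Q : Set E, Q.Countable ∧
      closure (toWeakSpace ℝ E '' D) ⊆ ⋃ q : Q, toWeakSpace ℝ E '' Metric.closedBall q r := by
  obtain ⟨Q, hQc, hQ⟩ := hD.isSeparable.span (R := ℝ)
  refine ⟨Q, hQc, fun w hw => ?_⟩
  have hwQ := closure_minimal hQ isClosed_closure (toWeakSpace_symm_mem_closure_span hw)
  obtain ⟨q, hq, hdist⟩ := Metric.mem_closure_iff.1 hwQ r hr
  exact mem_iUnion.2 ⟨⟨q, hq⟩, (toWeakSpace ℝ E).symm w, Metric.mem_closedBall.2 hdist.le, by simp⟩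

/-- Rational endpoints make the boxes built from a countable set of functionals countable. -/
def weakBox (T : Set (StrongDual ℝ E × ℚ × ℚ)) : Set (WeakSpace ℝ E) :=
  {w | ∀ p ∈ T, p.1 ((toWeakSpace ℝ E).symm w) ∈ Ioo (p.2.1 : ℝ) p.2.2}

theorem isOpen_weakBox {T : Set (StrongDual ℝ E × ℚ × ℚ)} (hT : T.Finite) :
    IsOpen (weakBox T) := by
  simp only [weakBox, ofPred_forall]
  exact hT.isOpen_biInter fun p _ => isOpen_Ioo.preimage (continuous_dual_toWeakSpace_symm p.1)

theorem exists_weakBox_mapsTo (Φ : Set (StrongDual ℝ E)) {w₀ : WeakSpace ℝ E}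
    {O : Set (Φ → ℝ)}
    (hO : O ∈ 𝓝 fun φ : Φ => (φ : StrongDual ℝ E) ((toWeakSpace ℝ E).symm w₀)) :
    ∃ T, T.Finite ∧ T ⊆ Φ ×ˢ univ ∧ w₀ ∈ weakBox T ∧
      MapsTo (fun w (φ : Φ) => (φ : StrongDual ℝ E) ((toWeakSpace ℝ E).symm w)) (weakBox T) O := by
  rw [nhds_pi, mem_pi'] at hO
  obtain ⟨I, t, ht, hIt⟩ := hO
  have hrat : ∀ φ : Φ, ∃ q : ℚ × ℚ,
      (φ : StrongDual ℝ E) ((toWeakSpace ℝ E).symm w₀) ∈ Ioo (q.1 : ℝ) q.2 ∧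
        Ioo (q.1 : ℝ) q.2 ⊆ t φ := by
    intro φ
    obtain ⟨v, hIoo, hmem, hsub⟩ := Real.isTopologicalBasis_Ioo_rat.mem_nhds_iff.1 (ht φ)
    simp only [mem_iUnion, mem_singleton_iff] at hIoo
    obtain ⟨a, b, -, rfl⟩ := hIoo
    exact ⟨(a, b), hmem, hsub⟩
  choose q hq using hrat
  refine ⟨(fun φ : Φ => ((φ : StrongDual ℝ E), q φ)) '' I, I.finite_toSet.image _, ?_, ?_, ?_⟩
  · rintro - ⟨φ, -, rfl⟩
    exact ⟨φ.2, trivial⟩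
  · rintro - ⟨φ, -, rfl⟩
    exact (hq φ).1
  · exact fun w hw => hIt fun φ hφ => (hq φ).2 (hw _ ⟨φ, hφ, rfl⟩)

/-- Baire's theorem in the image of the weak closure of `D` under the `Φ`-coordinates, covered by
the images of countably many closed balls of radius `ε / 2` centred in the separable span of `D`. -/
theorem exists_weakBox_dual_sub_le (hrefl : Function.Surjective (inclusionInDoubleDual ℝ E))
    (Φ : Set (StrongDual ℝ E)) {D : Set E} (hDc : D.Countable) (hDb : IsBounded D)
    (hDne : D.Nonempty) {ε : ℝ} (hε : 0 < ε) :
    ∃ T, T.Finite ∧ T ⊆ Φ ×ˢ univ ∧ (D ∩ toWeakSpace ℝ E ⁻¹' weakBox T).Nonempty ∧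
      ∀ u ∈ D ∩ toWeakSpace ℝ E ⁻¹' weakBox T, ∀ v ∈ D ∩ toWeakSpace ℝ E ⁻¹' weakBox T,
        ∀ g ∈ Φ, |g u - g v| ≤ ‖g‖ * ε := by
  set K := closure (toWeakSpace ℝ E '' D)
  have hK : IsCompact K := hDb.isCompact_closure_image_toWeakSpace hrefl
  set j : WeakSpace ℝ E → (Φ → ℝ) := fun w φ => (φ : StrongDual ℝ E) ((toWeakSpace ℝ E).symm w)
  have hj : Continuous j := continuous_pi fun φ => continuous_dual_toWeakSpace_symm φ.1
  obtain ⟨Q, hQc, hKQ⟩ := exists_countable_cover_closure_image_toWeakSpace hDc (half_pos hε)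
  have : Countable Q := hQc.to_subtype
  let ball : Q → Set (WeakSpace ℝ E) := fun q => K ∩ toWeakSpace ℝ E '' Metric.closedBall q (ε / 2)
  have hcover : j '' K ⊆ ⋃ q : Q, j '' ball q := by
    rintro - ⟨w, hw, rfl⟩
    obtain ⟨q, hq⟩ := mem_iUnion.1 (hKQ hw)
    exact mem_iUnion.2 ⟨q, w, ⟨hw, hq⟩, rfl⟩
  obtain ⟨q, O, hO, ⟨-, hOw, w₀, hw₀, rfl⟩, hOK⟩ :=
    (hK.image hj).exists_isOpen_inter_subset_of_countable_cover
      ((hDne.image _).closure.image _)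
      (fun q => ((hK.inter_right (Metric.isClosed_closedBall.image_toWeakSpace
        (convex_closedBall _ _))).image hj).isClosed) hcover
  obtain ⟨T, hTfin, hTΦ, hw₀T, hTO⟩ := exists_weakBox_mapsTo Φ (hO.mem_nhds hOw)
  have hnear : ∀ u ∈ D ∩ toWeakSpace ℝ E ⁻¹' weakBox T,
      ∃ x ∈ Metric.closedBall (q : E) (ε / 2), ∀ g ∈ Φ, g u = g x := by
    rintro u ⟨huD, huT⟩
    obtain ⟨w, ⟨-, x, hx, rfl⟩, hwu⟩ :=
      hOK ⟨hTO huT, toWeakSpace ℝ E u, subset_closure (mem_image_of_mem _ huD), rfl⟩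
    exact ⟨x, hx, fun g hg => (congrFun hwu ⟨g, hg⟩).symm⟩
  refine ⟨T, hTfin, hTΦ, ?_, fun u hu v hv g hg => ?_⟩
  · obtain ⟨-, hmem, d, hd, rfl⟩ := mem_closure_iff.1 hw₀ _ (isOpen_weakBox hTfin) hw₀T
    exact ⟨d, hd, hmem⟩
  obtain ⟨x, hx, hgx⟩ := hnear u hu
  obtain ⟨y, hy, hgy⟩ := hnear v hv
  have hxy : ‖x - y‖ ≤ ε := by
    rw [← dist_eq_norm]
    linarith [dist_triangle_right x y q, Metric.mem_closedBall.1 hx, Metric.mem_closedBall.1 hy]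
  calc |g u - g v| = ‖g (x - y)‖ := by rw [hgx g hg, hgy g hg, map_sub, Real.norm_eq_abs]
    _ ≤ ‖g‖ * ‖x - y‖ := g.le_opNorm (x - y)
    _ ≤ ‖g‖ * ε := mul_le_mul_of_nonneg_left hxy (norm_nonneg g)

theorem Bornology.IsBounded.exists_isOpen_weak_norm_sub_le
    (hrefl : Function.Surjective (inclusionInDoubleDual ℝ E)) {A : Set E} (hA : IsBounded A)
    (hne : A.Nonempty) {ε : ℝ} (hε : 0 < ε) :
    ∃ W : Set (WeakSpace ℝ E), IsOpen W ∧ (A ∩ toWeakSpace ℝ E ⁻¹' W).Nonempty ∧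
      ∀ u ∈ A ∩ toWeakSpace ℝ E ⁻¹' W, ∀ v ∈ A ∩ toWeakSpace ℝ E ⁻¹' W, ‖u - v‖ ≤ ε := by
  by_contra! H
  have hpair : ∀ T : Set (StrongDual ℝ E × ℚ × ℚ), ∃ p : E × E, p.1 ∈ A ∧ p.2 ∈ A ∧
      (T.Finite → (A ∩ toWeakSpace ℝ E ⁻¹' weakBox T).Nonempty →
        toWeakSpace ℝ E p.1 ∈ weakBox T ∧ toWeakSpace ℝ E p.2 ∈ weakBox T ∧ ε < ‖p.1 - p.2‖) := by
    intro T
    by_cases h : T.Finite ∧ (A ∩ toWeakSpace ℝ E ⁻¹' weakBox T).Nonempty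
    · obtain ⟨u, hu, v, hv, huv⟩ := H _ (isOpen_weakBox h.1) h.2
      exact ⟨(u, v), hu.1, hv.1, fun _ _ => ⟨hu.2, hv.2, huv⟩⟩
    · obtain ⟨a, ha⟩ := hne
      exact ⟨(a, a), ha, ha, fun h₁ h₂ => absurd ⟨h₁, h₂⟩ h⟩
  choose p hpA₁ hpA₂ hp using hpair
  choose g hg₁ hg using fun T => exists_dual_vector'' ℝ ((p T).1 - (p T).2)
  -- `Φ` contains the norming functional of every box it generates, and `D` the chosen pairs.
  obtain ⟨Φ, hΦc, hgΦ⟩ := exists_countable_closed_under_prod g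
  set boxes := {T : Set (StrongDual ℝ E × ℚ × ℚ) | T.Finite ∧ T ⊆ Φ ×ˢ univ}
  set D := ⋃ T ∈ boxes, {(p T).1, (p T).2}
  have hDc : D.Countable := (countable_ofPred_finite_subset (hΦc.prod countable_univ)).biUnion
    fun T _ => (countable_singleton _).insert _
  have hDA : D ⊆ A := iUnion₂_subset fun T _ =>
    insert_subset (hpA₁ T) (singleton_subset_iff.2 (hpA₂ T))
  have hpD : ∀ T ∈ boxes, (p T).1 ∈ D ∧ (p T).2 ∈ D := fun T hT =>
    ⟨mem_biUnion hT (mem_insert _ _), mem_biUnion hT (mem_insert_of_mem _ rfl)⟩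
  obtain ⟨T, hTfin, hTΦ, ⟨d, hdD, hdT⟩, hsmall⟩ := exists_weakBox_dual_sub_le hrefl Φ hDc
    (hA.subset hDA) ⟨_, (hpD ∅ ⟨finite_empty, empty_subset _⟩).1⟩ hε
  obtain ⟨hu, hv, huv⟩ := hp T hTfin ⟨d, hDA hdD, hdT⟩
  have hle : ‖(p T).1 - (p T).2‖ ≤ ε :=
    calc ‖(p T).1 - (p T).2‖ = g T ((p T).1 - (p T).2) := (hg T).symm
      _ ≤ |g T (p T).1 - g T (p T).2| := by rw [map_sub]; exact le_abs_self _
      _ ≤ ‖g T‖ * ε := hsmall _ ⟨(hpD T ⟨hTfin, hTΦ⟩).1, hu⟩ _ ⟨(hpD T ⟨hTfin, hTΦ⟩).2, hv⟩ _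
          (hgΦ T hTfin hTΦ)
      _ ≤ ε := mul_le_of_le_one_left hε.le (hg₁ T)
  exact huv.not_ge hle

end WeakTopology

namespace ContinuousLinearMapWOT

variable {E : Type*} [NormedAddCommGroup E] [NormedSpace ℝ E]

theorem continuous_toWeakSpace_apply (x : E) :
    Continuous fun S : E →WOT[ℝ] E => toWeakSpace ℝ E (S x) :=
  WeakBilin.continuous_of_continuous_eval _ fun y => continuous_dual_apply x y

theorem exists_clm_of_mem_closure_image_weak {s : Set (E →L[ℝ] E)} (hs : IsBounded s)
    {f : E → WeakSpace ℝ E} (hf : f ∈ closure ((fun T x => toWeakSpace ℝ E (T x)) '' s)) :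
    ∃ T : E →L[ℝ] E, ∀ x, toWeakSpace ℝ E (T x) = f x := by
  obtain ⟨C, hC⟩ := isBounded_iff_forall_norm_le.1 hs
  have hlin : f ∈ closure (range ((↑) : (E →ₗ[ℝ] WeakSpace ℝ E) → E → WeakSpace ℝ E)) := by
    refine closure_mono ?_ hf
    rintro - ⟨T, -, rfl⟩
    exact ⟨(toWeakSpace ℝ E).toLinearMap ∘ₗ T.toLinearMap, rfl⟩
  have hbound : ∀ x, ‖(toWeakSpace ℝ E).symm (f x)‖ ≤ C * ‖x‖ := by
    intro x
    have hball : f x ∈ toWeakSpace ℝ E '' Metric.closedBall 0 (C * ‖x‖) := by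
      refine closure_minimal ?_ ((Metric.isClosed_closedBall.image_toWeakSpace
        (convex_closedBall _ _)).preimage (continuous_apply x)) hf
      rintro - ⟨T, hT, rfl⟩
      exact ⟨T x, by simpa using T.le_of_opNorm_le (hC T hT) x, rfl⟩
    obtain ⟨y, hy, hyx⟩ := hball
    simpa [← hyx] using hy
  exact ⟨((toWeakSpace ℝ E).symm.toLinearMap ∘ₗ linearMapOfMemClosureRangeCoe f hlin).mkContinuous
    C (by simpa using hbound), fun x => rfl⟩

/-- A limit of bounded operators in the topology of pointwise weak convergence is again a
bounded operator, so the WOT closure sits inside a Tychonoff product of weakly compact balls. -/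
theorem isCompact_closure_image_ofCLM (hrefl : Function.Surjective (inclusionInDoubleDual ℝ E))
    {s : Set (E →L[ℝ] E)} (hs : IsBounded s) : IsCompact (closure (ofCLM '' s)) := by
  set c : (E →L[ℝ] E) → E → WeakSpace ℝ E := fun T x => toWeakSpace ℝ E (T x)
  set L := closure (c '' s)
  have hL : IsCompact L := by
    refine (isCompact_univ_pi fun x => ((ContinuousLinearMap.apply ℝ E x).lipschitz.isBounded_image
      hs).isCompact_closure_image_toWeakSpace hrefl).closure_of_subset ?_
    rintro - ⟨T, hT, rfl⟩ x -
    exact subset_closure ⟨T x, ⟨T, hT, rfl⟩, rfl⟩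
  have : CompactSpace L := isCompact_iff_compactSpace.1 hL
  choose R hR using fun f : L => exists_clm_of_mem_closure_image_weak hs f.2
  have hRc : Continuous fun f : L => ofCLM (R f) := by
    refine continuous_of_dual_apply_continuous fun x y => ?_
    have hRy : (fun f : L => y (R f x)) = fun f => y ((toWeakSpace ℝ E).symm (f.1 x)) :=
      funext fun f => by rw [← hR f x, LinearEquiv.symm_apply_apply]
    change Continuous fun f : L => y (R f x)
    rw [hRy]
    exact (continuous_dual_toWeakSpace_symm y).comp
      ((continuous_apply x).comp continuous_subtype_val)
  refine (isCompact_range hRc).closure_of_subset ?_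
  rintro - ⟨T, hT, rfl⟩
  refine ⟨⟨c T, subset_closure (mem_image_of_mem c hT)⟩, ?_⟩
  ext x
  exact hR _ x

theorem apply_eq_of_mapClusterPt {α : Type*} {l : Filter α} {f : α → E →L[ℝ] E}
    {S : E →WOT[ℝ] E} (hS : MapClusterPt S l (ofCLM ∘ f)) {ξ η : E}
    (h : Tendsto (fun a => f a ξ) l (𝓝 η)) : S ξ = η :=
  (toWeakSpace ℝ E).injective <|
    (hS.continuousAt_comp (continuous_toWeakSpace_apply ξ).continuousAt).eq_of_tendsto
      (((toWeakSpaceCLM ℝ E).continuous.tendsto η).comp h)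

theorem tendsto_toWeakSpace_apply_of_forall_mapClusterPt
    (hrefl : Function.Surjective (inclusionInDoubleDual ℝ E)) {α : Type*} {l : Filter α}
    {f : α → E →L[ℝ] E} (hf : IsBounded (range f)) {ξ η : E}
    (h : ∀ S, MapClusterPt S l (ofCLM ∘ f) → S ξ = η) :
    Tendsto (fun a => toWeakSpace ℝ E (f a ξ)) l (𝓝 (toWeakSpace ℝ E η)) := by
  have hclust := (isCompact_closure_image_ofCLM hrefl hf).tendsto_nhdsSet_of_mapClusterPt
    (s' := {S : E →WOT[ℝ] E | S ξ = η})
    (Eventually.of_forall fun a => subset_closure ⟨f a, mem_range_self a, rfl⟩) fun S _ hS => h S hS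
  have hev := (continuous_toWeakSpace_apply ξ).tendsto_nhdsSet (t := {toWeakSpace ℝ E η})
    fun S (hS : S ξ = η) => by simp [hS]
  rw [nhdsSet_singleton] at hev
  exact hev.comp hclust

end ContinuousLinearMapWOT

namespace ContinuousLinearEquiv

variable {R M : Type*} [Semiring R] [TopologicalSpace M] [AddCommMonoid M] [Module R M]

@[simp]
theorem one_apply (x : M) : (1 : M ≃L[R] M) x = x :=
  rfl

theorem mul_apply (e f : M ≃L[R] M) (x : M) : (e * f) x = e (f x) :=
  rfl

end ContinuousLinearEquiv

theorem tendsto_nhds_one_of_continuous_toWeakSpace {E : Type*} [NormedAddCommGroup E]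
    [NormedSpace ℝ E] (hrefl : Function.Surjective (inclusionInDoubleDual ℝ E)) {G : Type*}
    [Group G] [TopologicalSpace G] [IsTopologicalGroup G] (π : G →* (E ≃L[ℝ] E)) {C : ℝ}
    (hbd : ∀ x, ‖(π x : E →L[ℝ] E)‖ ≤ C) {ξ : E}
    (hweak : Continuous fun x => toWeakSpace ℝ E (π x ξ)) :
    Tendsto (fun x => π x ξ) (𝓝 1) (𝓝 ξ) := by
  have hC : 0 ≤ C := (norm_nonneg _).trans (hbd 1)
  have hA : IsBounded (range fun x => π x ξ) := isBounded_iff_forall_norm_le.2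
    ⟨C * ‖ξ‖, forall_mem_range.2 fun x => (π x : E →L[ℝ] E).le_of_opNorm_le (hbd x) ξ⟩
  rw [Metric.tendsto_nhds]
  intro ε hε
  obtain ⟨W, hW, ⟨-, ⟨x₀, rfl⟩, hx₀W⟩, hsmall⟩ :=
    hA.exists_isOpen_weak_norm_sub_le hrefl (range_nonempty _) (ε := ε / (C + 1)) (by positivity)
  have hN : ∀ᶠ z in 𝓝 1, toWeakSpace ℝ E (π (x₀ * z) ξ) ∈ W :=
    (hweak.comp (continuous_const_mul x₀)).continuousAt.preimage_mem_nhds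
      (by rw [Function.comp_apply, mul_one]; exact hW.mem_nhds hx₀W)
  filter_upwards [hN] with z hz
  have htrans : π z ξ - ξ = π x₀⁻¹ (π (x₀ * z) ξ - π x₀ ξ) := by
    rw [map_sub, ← ContinuousLinearEquiv.mul_apply, ← ContinuousLinearEquiv.mul_apply, ← map_mul,
      ← map_mul, inv_mul_cancel_left, inv_mul_cancel, map_one]
    rfl
  calc dist (π z ξ) ξ = ‖(π x₀⁻¹ : E →L[ℝ] E) (π (x₀ * z) ξ - π x₀ ξ)‖ := by
        rw [dist_eq_norm, htrans]; rfl
    _ ≤ C * ‖π (x₀ * z) ξ - π x₀ ξ‖ := (π x₀⁻¹ : E →L[ℝ] E).le_of_opNorm_le (hbd _) _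
    _ ≤ C * (ε / (C + 1)) :=
        mul_le_mul_of_nonneg_left (hsmall _ ⟨⟨_, rfl⟩, hz⟩ _ ⟨⟨_, rfl⟩, hx₀W⟩) hC
    _ < ε := by
        rw [mul_div_assoc', div_lt_iff₀ (by positivity)]
        nlinarith

theorem continuous_vector_iff_gamma_fixed_general
    {E : Type*} [NormedAddCommGroup E] [NormedSpace ℝ E]
    (hrefl : Function.Surjective (inclusionInDoubleDual ℝ E))
    {G : Type*} [CommGroup G] [TopologicalSpace G] [IsTopologicalGroup G]
    (π : G →* (E ≃L[ℝ] E)) (C : ℝ)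
    (hbd : ∀ x : G, ‖((π x : E ≃L[ℝ] E) : E →L[ℝ] E)‖ ≤ C)
    (Γ : Set (E →WOT[ℝ] E))
    (hΓ : Γ = ⋂ U ∈ nhds (1 : G),
      closure ((fun x : G => ContinuousLinearMapWOT.ofCLM
        ((π x : E ≃L[ℝ] E) : E →L[ℝ] E)) '' U))
    (ξ : E) :
    (Continuous fun x : G => π x ξ) ↔
      ∀ S ∈ Γ, ContinuousLinearMapWOT.toCLM S ξ = ξ := by
  have hΓ' : ∀ S, S ∈ Γ ↔ MapClusterPt S (𝓝 1) (fun x => ContinuousLinearMapWOT.ofCLM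
      ((π x : E ≃L[ℝ] E) : E →L[ℝ] E)) := fun S => by
    rw [hΓ, mem_iInter₂, mapClusterPt_iff_forall_mem_closure_image]
  simp only [hΓ', ContinuousLinearMapWOT.toCLM_apply]
  constructor
  · intro hcont S hS
    exact ContinuousLinearMapWOT.apply_eq_of_mapClusterPt hS (by simpa using hcont.tendsto 1)
  · intro hfix
    have hbounded : IsBounded (range fun x => (π x : E →L[ℝ] E)) :=
      isBounded_iff_forall_norm_le.2 ⟨C, forall_mem_range.2 hbd⟩
    have hweak1 := ContinuousLinearMapWOT.tendsto_toWeakSpace_apply_of_forall_mapClusterPt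
      hrefl hbounded hfix
    have hweak : Continuous fun x => toWeakSpace ℝ E (π x ξ) :=
      continuous_of_continuousAt_one_of_map_mul (fun y => WeakSpace.map (π y : E →L[ℝ] E))
        (fun y => (WeakSpace.map _).continuous) (fun y x => by rw [map_mul]; rfl)
        (by simpa [ContinuousAt] using hweak1)
    exact continuous_of_continuousAt_one_of_map_mul (fun y => π y) (fun y => (π y).continuous)
      (fun y x => by rw [map_mul]; rfl)
      (by simpa [ContinuousAt] using tendsto_nhds_one_of_continuous_toWeakSpace hrefl π hbd hweak)

/-- Let `E` be a reflexive Banach space, `G` a commutative topological group, `π` a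
uniformly bounded representation, and `Γ = ⋂_{U ∈ 𝒰(e)} closure_WOT(π(U))`.  Then
`ξ ∈ E` translates continuously (`x ↦ π(x)ξ` continuous) iff `Sξ = ξ` for all
`S ∈ Γ`. -/
theorem continuous_vector_iff_gamma_fixed
    {E : Type*} [NormedAddCommGroup E] [NormedSpace ℝ E] [CompleteSpace E]
    (hrefl : Function.Surjective (inclusionInDoubleDual ℝ E))
    {G : Type*} [CommGroup G] [TopologicalSpace G] [IsTopologicalGroup G]
    (π : G →* (E ≃L[ℝ] E)) (C : ℝ)
    (hbd : ∀ x : G, ‖((π x : E ≃L[ℝ] E) : E →L[ℝ] E)‖ ≤ C)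
    (Γ : Set (E →WOT[ℝ] E))
    (hΓ : Γ = ⋂ U ∈ nhds (1 : G),
      closure ((fun x : G => ContinuousLinearMapWOT.ofCLM
        ((π x : E ≃L[ℝ] E) : E →L[ℝ] E)) '' U))
    (ξ : E) :
    (Continuous fun x : G => π x ξ) ↔
      ∀ S ∈ Γ, ContinuousLinearMapWOT.toCLM S ξ = ξ :=
  continuous_vector_iff_gamma_fixed_general hrefl π C hbd Γ hΓ ξ
end

section
/- Let m be holomorphic and bounded by M on the open cone Γ_θ = {z ≠ 0 : |arg z| < θ}, and let 0 < ψ < θ. Define m_ψ(x) = m(xe^{iψ}) for x > 0 and m_ψ(x) = m(|x|e^{−iψ}) for x < 0. Then m_ψ satisfies |m_ψ(x)| ≤ M and |x · d/dx m_ψ(x)| ≤ M / sin(θ − ψ) for all x ≠ 0. -/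
/-!
Cauchy's estimate on a disc of radius `r` bounds `|m'(z₀)|` by `M / r`. Every point `z₀ ≠ 0` with
`|arg z₀| ≤ ψ` is the centre of a disc of radius `sin (θ - ψ) |z₀|` contained in the cone
`|arg z| < θ`, because a point `v` with `|v - 1| < sin δ` has `|arg v| < δ`. Finally, near a
point `x ≠ 0` the parametrisation `x ↦ |x| e^{± iψ}` of the boundary rays is multiplication by a
unimodular constant, so the chain rule gives `|x m_ψ'(x)| = |z₀| |m'(z₀)|` with `z₀ = |x| e^{± iψ}`.
-/

open Real Complex Set Metric Filter Topology

namespace Complex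

def openCone (θ : ℝ) : Set ℂ := {z | z ≠ 0 ∧ |arg z| < θ}

theorem isOpen_openCone (θ : ℝ) : IsOpen (openCone θ) := by
  rcases lt_or_ge π θ with hθ | hθ
  · have : openCone θ = {0}ᶜ := Set.ext fun z ↦ and_iff_left ((abs_arg_le_pi z).trans_lt hθ)
    rw [this]
    exact isOpen_compl_singleton
  · have : openCone θ = slitPlane ∩ (fun z ↦ |arg z|) ⁻¹' Iio θ := by
      ext z
      simp only [openCone, mem_ofPred_eq, mem_inter_iff, mem_preimage, mem_Iio,
        mem_slitPlane_iff_arg]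
      constructor
      · rintro ⟨hz, h⟩
        refine ⟨⟨fun hπ ↦ ?_, hz⟩, h⟩
        rw [hπ, abs_of_pos pi_pos] at h
        linarith
      · rintro ⟨⟨-, hz⟩, h⟩
        exact ⟨hz, h⟩
    rw [this]
    exact continuousOn_arg.abs.isOpen_inter_preimage isOpen_slitPlane isOpen_Iio

-- Rotating by `-arg v` moves `v` to the positive real axis and `1` to `e^{-i arg v}`.
theorem abs_sin_arg_le_norm_sub_one (v : ℂ) : |Real.sin (arg v)| ≤ ‖v - 1‖ := by
  have hrot : v - 1 = exp (arg v * I) * (‖v‖ - exp ((-arg v : ℝ) * I)) := by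
    rw [mul_sub, ← exp_add, ofReal_neg, neg_mul, add_neg_cancel, exp_zero, mul_comm,
      norm_mul_exp_arg_mul_I]
  calc |Real.sin (arg v)| = |((‖v‖ : ℂ) - exp ((-arg v : ℝ) * I)).im| := by
        rw [sub_im, ofReal_im, exp_ofReal_mul_I_im, Real.sin_neg, zero_sub, neg_neg]
    _ ≤ ‖(‖v‖ : ℂ) - exp ((-arg v : ℝ) * I)‖ := abs_im_le_norm _
    _ = ‖v - 1‖ := by rw [hrot, norm_mul, norm_exp_ofReal_mul_I, one_mul]

theorem abs_arg_lt_of_norm_sub_one_lt {δ : ℝ} (hδ₀ : 0 ≤ δ) {v : ℂ}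
    (hv : ‖v - 1‖ < Real.sin δ) : |arg v| < δ := by
  have hre : 0 < v.re := by
    have := (abs_re_le_norm (v - 1)).trans_lt (hv.trans_le (Real.sin_le_one δ))
    rw [sub_re, one_re, abs_sub_lt_iff] at this
    linarith
  have hπ2 : |arg v| < π / 2 := abs_arg_lt_pi_div_two_iff.2 (Or.inl hre)
  by_contra! hδ
  have := Real.sin_le_sin_of_le_of_le_pi_div_two (by linarith) hπ2.le hδ
  rw [← abs_sin_eq_sin_abs_of_abs_le_pi (abs_arg_le_pi v)] at this
  linarith [abs_sin_arg_le_norm_sub_one v]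

theorem ball_subset_openCone {θ ψ : ℝ} (hψθ : ψ < θ) (hθ : θ ≤ π) {z₀ : ℂ} (hz₀ : z₀ ≠ 0)
    (harg : |arg z₀| ≤ ψ) : ball z₀ (Real.sin (θ - ψ) * ‖z₀‖) ⊆ openCone θ := by
  intro w hw
  have hv : ‖w / z₀ - 1‖ < Real.sin (θ - ψ) := by
    rwa [div_sub_one hz₀, norm_div, div_lt_iff₀ (norm_pos_iff.2 hz₀), ← dist_eq]
  have hv₀ : w / z₀ ≠ 0 := by
    rintro h
    rw [h, zero_sub, norm_neg, norm_one] at hv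
    linarith [Real.sin_le_one (θ - ψ)]
  have hargv := abs_arg_lt_of_norm_sub_one_lt (sub_nonneg.2 hψθ.le) hv
  rw [← mul_div_cancel₀ w hz₀]
  refine ⟨mul_ne_zero hz₀ hv₀, ?_⟩
  obtain ⟨h₁, h₂⟩ := abs_le.1 harg
  obtain ⟨h₃, h₄⟩ := abs_lt.1 hargv
  rw [arg_mul hz₀ hv₀ ⟨by linarith, by linarith⟩]
  exact (abs_add_le _ _).trans_lt (by linarith)

theorem norm_deriv_le_of_forall_mem_ball_norm_le {E : Type*} [NormedAddCommGroup E]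
    [NormedSpace ℂ E] {f : ℂ → E} {c : ℂ} {R M : ℝ} (hR : 0 < R)
    (hf : DifferentiableOn ℂ f (ball c R)) (hM : ∀ z ∈ ball c R, ‖f z‖ ≤ M) :
    ‖deriv f c‖ ≤ M / R := by
  have hsmaller : ∀ r ∈ Ioo 0 R, ‖deriv f c‖ ≤ M / r := fun r ⟨hr₀, hrR⟩ ↦
    norm_deriv_le_of_forall_mem_sphere_norm_le hr₀
      (hf.diffContOnCl_ball (closedBall_subset_ball hrR))
      fun z hz ↦ hM z (closedBall_subset_ball hrR (sphere_subset_closedBall hz))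
  refine ge_of_tendsto (x := 𝓝[<] R)
    ((continuousAt_const.div continuousAt_id hR.ne').tendsto.mono_left nhdsWithin_le_nhds) ?_
  filter_upwards [Ioo_mem_nhdsLT hR] with r hr using hsmaller r hr

theorem norm_mul_norm_deriv_le_of_abs_arg_le {E : Type*} [NormedAddCommGroup E]
    [NormedSpace ℂ E] {θ ψ M : ℝ} {m : ℂ → E} (hm : DifferentiableOn ℂ m (openCone θ))
    (hbd : ∀ z ∈ openCone θ, ‖m z‖ ≤ M) (hψ : 0 < ψ) (hψθ : ψ < θ) (hθ : θ ≤ π) {z₀ : ℂ}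
    (hz₀ : z₀ ≠ 0) (harg : |arg z₀| ≤ ψ) : ‖z₀‖ * ‖deriv m z₀‖ ≤ M / Real.sin (θ - ψ) := by
  have hsin : 0 < Real.sin (θ - ψ) := Real.sin_pos_of_pos_of_lt_pi (by linarith) (by linarith)
  have hr : 0 < Real.sin (θ - ψ) * ‖z₀‖ := mul_pos hsin (norm_pos_iff.2 hz₀)
  have hball := ball_subset_openCone hψθ hθ hz₀ harg
  have hcauchy := norm_deriv_le_of_forall_mem_ball_norm_le hr (hm.mono hball)
    fun z hz ↦ hbd z (hball hz)
  rw [le_div_iff₀ hr] at hcauchy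
  rw [le_div_iff₀ hsin]
  linarith

noncomputable def coneBoundaryPoint (ψ y : ℝ) : ℂ := |y| * exp ((Real.sign y * ψ : ℝ) * I)

theorem norm_coneBoundaryPoint (ψ y : ℝ) : ‖coneBoundaryPoint ψ y‖ = |y| := by
  rw [coneBoundaryPoint, norm_mul, norm_exp_ofReal_mul_I, mul_one, norm_real, Real.norm_eq_abs,
    abs_abs]

theorem coneBoundaryPoint_ne_zero (ψ : ℝ) {y : ℝ} (hy : y ≠ 0) : coneBoundaryPoint ψ y ≠ 0 :=
  norm_ne_zero_iff.1 (by rwa [norm_coneBoundaryPoint, abs_ne_zero])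

theorem abs_arg_coneBoundaryPoint {ψ y : ℝ} (hψ : 0 ≤ ψ) (hψπ : ψ < π) (hy : y ≠ 0) :
    |arg (coneBoundaryPoint ψ y)| = ψ := by
  rw [coneBoundaryPoint, arg_real_mul _ (abs_pos.2 hy), arg_exp_mul_I]
  rcases Real.sign_apply_eq_of_ne_zero y hy with h | h <;>
  · rw [h, (toIocMod_eq_self _).2 ⟨by linarith, by linarith⟩]
    simp [abs_of_nonneg hψ]

theorem coneBoundaryPoint_eventuallyEq (ψ : ℝ) {x : ℝ} (hx : x ≠ 0) :
    coneBoundaryPoint ψ =ᶠ[𝓝 x]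
      fun y ↦ Real.sign x * exp ((Real.sign x * ψ : ℝ) * I) * y := by
  rcases hx.lt_or_gt with hx | hx
  · filter_upwards [Iio_mem_nhds hx] with y hy
    rw [coneBoundaryPoint, abs_of_neg hy, Real.sign_of_neg hy, Real.sign_of_neg hx]
    push_cast
    ring
  · filter_upwards [Ioi_mem_nhds hx] with y hy
    rw [coneBoundaryPoint, abs_of_pos hy, Real.sign_of_pos hy, Real.sign_of_pos hx]
    push_cast
    ring

theorem norm_deriv_comp_coneBoundaryPoint {m : ℂ → ℂ} {ψ x : ℝ} (hx : x ≠ 0)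
    (hm : DifferentiableAt ℂ m (coneBoundaryPoint ψ x)) :
    ‖deriv (fun y ↦ m (coneBoundaryPoint ψ y)) x‖ = ‖deriv m (coneBoundaryPoint ψ x)‖ := by
  set u : ℂ := Real.sign x * exp ((Real.sign x * ψ : ℝ) * I)
  have hnear := coneBoundaryPoint_eventuallyEq ψ hx
  have hux : u * x = coneBoundaryPoint ψ x := hnear.eq_of_nhds.symm
  have hu : ‖u‖ = 1 := by
    rw [norm_mul, norm_exp_ofReal_mul_I, mul_one, norm_real, Real.norm_eq_abs]
    rcases Real.sign_apply_eq_of_ne_zero x hx with h | h <;> simp [h]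
  have hderiv : HasDerivAt (fun y : ℝ ↦ m (u * y)) (deriv m (u * x) * u) x := by
    rw [← hux] at hm
    simpa using (hm.hasDerivAt.comp _ ((hasDerivAt_id _).const_mul u)).comp_ofReal
  have hnear' : (fun y ↦ m (coneBoundaryPoint ψ y)) =ᶠ[𝓝 x] fun y ↦ m (u * y) :=
    hnear.fun_comp m
  rw [hnear'.deriv_eq, hderiv.deriv, norm_mul, hu, mul_one, hux]

end Complex

/-- Let `m` be holomorphic and bounded by `M` on the open cone
`Γ_θ = {z ≠ 0 : |arg z| < θ}`, `0 < ψ < θ ≤ π`.  The boundary-type function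
`m_ψ(x) = m(xe^{iψ})` for `x > 0`, `m(|x|e^{-iψ})` for `x < 0`, satisfies
`|m_ψ(x)| ≤ M` and `|x · m_ψ'(x)| ≤ M / sin(θ - ψ)` for all `x ≠ 0`. -/
theorem cone_boundary_mihlin_estimate
    (θ ψ M : ℝ) (hψ : 0 < ψ) (hψθ : ψ < θ) (hθ : θ ≤ Real.pi)
    (m : ℂ → ℂ)
    (hm : DifferentiableOn ℂ m {z : ℂ | z ≠ 0 ∧ |Complex.arg z| < θ})
    (hbd : ∀ z ∈ {z : ℂ | z ≠ 0 ∧ |Complex.arg z| < θ}, ‖m z‖ ≤ M)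
    (x : ℝ) (hx : x ≠ 0) :
    ‖m (((|x| : ℝ) : ℂ) *
        Complex.exp (((Real.sign x * ψ : ℝ) : ℂ) * Complex.I))‖ ≤ M ∧
      |x| * ‖
          (deriv (fun y : ℝ => m (((|y| : ℝ) : ℂ) *
            Complex.exp (((Real.sign y * ψ : ℝ) : ℂ) * Complex.I))) x)‖
        ≤ M / Real.sin (θ - ψ) := by
  change ‖m (coneBoundaryPoint ψ x)‖ ≤ M ∧
    |x| * ‖deriv (fun y ↦ m (coneBoundaryPoint ψ y)) x‖ ≤ M / Real.sin (θ - ψ)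
  have hz₀ := coneBoundaryPoint_ne_zero ψ hx
  have harg : |arg (coneBoundaryPoint ψ x)| ≤ ψ :=
    (abs_arg_coneBoundaryPoint hψ.le (hψθ.trans_le hθ) hx).le
  have hmem : coneBoundaryPoint ψ x ∈ openCone θ := ⟨hz₀, harg.trans_lt hψθ⟩
  refine ⟨hbd _ hmem, ?_⟩
  have hdiff := hm.differentiableAt ((isOpen_openCone θ).mem_nhds hmem)
  rw [norm_deriv_comp_coneBoundaryPoint hx hdiff, ← norm_coneBoundaryPoint ψ x]
  exact norm_mul_norm_deriv_le_of_abs_arg_le hm hbd hψ hψθ hθ hz₀ harg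
end
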